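/- arXiv:0909.3339 — 5 statements merged into one kernel-verified Lean document; each statement's English description precedes it below -/
import Mathlib

section
/- Let X and Y be real Banach spaces, U ⊆ X an open set, and f : U → Y a continuously differentiable map. Let x₀ ∈ U and suppose D := df(x₀) : X → Y is surjective and admits a bounded linear right inverse Q : Y → X (i.e. D ∘ Q = id_Y). Let δ > 0 and C > 0 be constants such that ‖Q‖ ≤ C, the closed ball of radius δ centered at x₀ is contained in U, and for every x with ‖x − x₀‖ ≤ δ one has ‖df(x) − D‖ ≤ 1/(2C). Suppose x₁ ∈ X satisfies ‖x₁ − x₀‖ ≤ δ/8 and ‖f(x₁)‖ ≤ δ/(4C). Then there exists a unique x ∈ X such that f(x) = 0, x − x₁ lies in the range of Q, and ‖x − x₀‖ ≤ δ; moreover this x satisfies ‖x − x₁‖ ≤ 2C·‖f(x₁)‖. -/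
/-!
On the affine subspace `x₁ + range Q` the simplified Newton map `φ x = x - Q (f x)` has the
zeros of `f` as its fixed points, and `φ a - φ b = Q (D (a - b) - (f a - f b))` there because
`Q ∘ D` is the identity on `range Q`. By the mean value inequality this is at most
`‖Q‖ / (2C) ‖a - b‖ ≤ ‖a - b‖ / 2` on the `δ`-ball. Since `φ` moves `x₁` by at most `C ‖f x₁‖`,
it maps the ball of radius `2C ‖f x₁‖` about `x₁`, which lies in the `δ`-ball, into itself; the
contraction principle gives the zero, and contraction on the whole `δ`-ball its uniqueness.
-/

open Set Metric Function NNReal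

theorem LipschitzOnWith.eq_of_isFixedPt {α : Type*} [MetricSpace α] {g : α → α} {K : ℝ≥0}
    {t : Set α} (hg : LipschitzOnWith K g t) (hK : K < 1) {x y : α} (hx : x ∈ t) (hy : y ∈ t)
    (hgx : IsFixedPt g x) (hgy : IsFixedPt g y) : x = y := by
  have h := hg.dist_le_mul x hx y hy
  rw [hgx.eq, hgy.eq] at h
  have hK' : (K : ℝ) < 1 := hK
  exact dist_le_zero.mp (by nlinarith [dist_nonneg (x := x) (y := y)])

theorem exists_isFixedPt_mem_closedBall_inter {α : Type*} [MetricSpace α] [CompleteSpace α]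
    {g : α → α} {K : ℝ≥0} {s : Set α} {c : α} {r : ℝ} (hK : K < 1) (hs : IsClosed s)
    (hgs : MapsTo g s s) (hg : LipschitzOnWith K g (closedBall c r ∩ s)) (hc : c ∈ s)
    (hgc : dist (g c) c ≤ (1 - K) * r) : ∃ x ∈ closedBall c r ∩ s, IsFixedPt g x := by
  have hK' : (K : ℝ) < 1 := hK
  have hr : 0 ≤ r := by nlinarith [dist_nonneg (x := g c) (y := c)]
  have hcS : c ∈ closedBall c r ∩ s := ⟨mem_closedBall_self hr, hc⟩
  have hmaps : MapsTo g (closedBall c r ∩ s) (closedBall c r ∩ s) := by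
    refine fun x hx ↦ ⟨?_, hgs hx.2⟩
    have hxc := hg.dist_le_mul x hx c hcS
    have hxr := mem_closedBall.mp hx.1
    calc dist (g x) c ≤ dist (g x) (g c) + dist (g c) c := dist_triangle _ _ _
      _ ≤ K * r + (1 - K) * r := by gcongr; exact hxc.trans (by gcongr)
      _ = r := by ring
  obtain ⟨x, hx, hfix, -⟩ := ContractingWith.exists_fixedPoint'
    (isClosed_closedBall.inter hs).isComplete hmaps ⟨hK, hg.mapsToRestrict hmaps⟩ hcS
    (edist_ne_top _ _)
  exact ⟨x, hx, hfix⟩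

section NewtonMap

variable {X Y : Type*} [NormedAddCommGroup X] [NormedSpace ℝ X] [NormedAddCommGroup Y]
  [NormedSpace ℝ Y] {D : X →L[ℝ] Y} {Q : Y →L[ℝ] X} {f : X → Y}

def newtonMap (Q : Y →L[ℝ] X) (f : X → Y) (x : X) : X := x - Q (f x)

theorem isFixedPt_newtonMap_iff (hDQ : LeftInverse D Q) {x : X} :
    IsFixedPt (newtonMap Q f) x ↔ f x = 0 := by
  rw [IsFixedPt, newtonMap, sub_eq_self, ← map_zero Q, hDQ.injective.eq_iff]

theorem newtonMap_sub_newtonMap (hDQ : LeftInverse D Q) {a b : X}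
    (hab : a - b ∈ LinearMap.range (Q : Y →ₗ[ℝ] X)) :
    newtonMap Q f a - newtonMap Q f b = Q (D (a - b) - (f a - f b)) := by
  obtain ⟨z, hz⟩ := hab
  have hz : Q z = a - b := hz
  rw [← hz, hDQ z, map_sub, hz, map_sub, newtonMap, newtonMap]
  abel

theorem norm_newtonMap_sub_le (hDQ : LeftInverse D Q) {df : X → X →L[ℝ] Y} {s : Set X} {ε : ℝ}
    (hs : Convex ℝ s) (hf : ∀ x ∈ s, HasFDerivWithinAt f (df x) s x)
    (hdf : ∀ x ∈ s, ‖df x - D‖ ≤ ε) {a b : X} (ha : a ∈ s) (hb : b ∈ s)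
    (hab : a - b ∈ LinearMap.range (Q : Y →ₗ[ℝ] X)) :
    ‖newtonMap Q f a - newtonMap Q f b‖ ≤ ‖Q‖ * ε * ‖a - b‖ := by
  have hmvt : ‖f a - f b - D (a - b)‖ ≤ ε * ‖a - b‖ :=
    hs.norm_image_sub_le_of_norm_hasFDerivWithin_le' hf hdf hb ha
  rw [newtonMap_sub_newtonMap hDQ hab, mul_assoc]
  refine (Q.le_opNorm _).trans (mul_le_mul_of_nonneg_left ?_ (norm_nonneg Q))
  rwa [← norm_neg, neg_sub]

theorem dist_newtonMap_self_le (x : X) : dist (newtonMap Q f x) x ≤ ‖Q‖ * ‖f x‖ := by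
  rw [dist_eq_norm, newtonMap, sub_sub_cancel_left, norm_neg]
  exact Q.le_opNorm _

theorem isClosed_mk'_range (hDQ : LeftInverse D Q) (x₁ : X) :
    IsClosed (AffineSubspace.mk' x₁ (LinearMap.range (Q : Y →ₗ[ℝ] X)) : Set X) := by
  rw [← AffineSubspace.isClosed_direction_iff, AffineSubspace.direction_mk']
  exact hDQ.isClosed_range D.continuous Q.continuous

theorem newtonMap_mem_mk' {x₁ x : X}
    (hx : x ∈ AffineSubspace.mk' x₁ (LinearMap.range (Q : Y →ₗ[ℝ] X))) :
    newtonMap Q f x ∈ AffineSubspace.mk' x₁ (LinearMap.range (Q : Y →ₗ[ℝ] X)) := by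
  rw [AffineSubspace.mem_mk', vsub_eq_sub] at hx ⊢
  rw [newtonMap, sub_right_comm]
  exact Submodule.sub_mem _ hx (LinearMap.mem_range_self (Q : Y →ₗ[ℝ] X) _)

theorem lipschitzOnWith_newtonMap (hDQ : LeftInverse D Q) {df : X → X →L[ℝ] Y} {s : Set X}
    {ε : ℝ} {K : ℝ≥0} (hs : Convex ℝ s) (hf : ∀ x ∈ s, HasFDerivWithinAt f (df x) s x)
    (hdf : ∀ x ∈ s, ‖df x - D‖ ≤ ε) (hK : ‖Q‖ * ε ≤ K) (x₁ : X) :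
    LipschitzOnWith K (newtonMap Q f)
      (s ∩ AffineSubspace.mk' x₁ (LinearMap.range (Q : Y →ₗ[ℝ] X))) := by
  refine LipschitzOnWith.of_dist_le_mul fun a ha b hb ↦ ?_
  have hab := AffineSubspace.vsub_mem_direction ha.2 hb.2
  rw [AffineSubspace.direction_mk'] at hab
  rw [dist_eq_norm, dist_eq_norm]
  exact (norm_newtonMap_sub_le hDQ hs hf hdf ha.1 hb.1 hab).trans
    (mul_le_mul_of_nonneg_right hK (norm_nonneg _))

end NewtonMap

theorem stmt_0_general
    {X Y : Type*} [NormedAddCommGroup X] [NormedSpace ℝ X] [CompleteSpace X]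
    [NormedAddCommGroup Y] [NormedSpace ℝ Y]
    (U : Set X) (f : X → Y) (df : X → X →L[ℝ] Y)
    (hdf : ∀ x ∈ U, HasFDerivAt f (df x) x)
    (x₀ : X)
    (Q : Y →L[ℝ] X) (hQright : ∀ y : Y, df x₀ (Q y) = y)
    (δ C : ℝ) (hC : 0 < C)
    (hQnorm : ‖Q‖ ≤ C)
    (hball : Metric.closedBall x₀ δ ⊆ U)
    (hquad : ∀ x : X, ‖x - x₀‖ ≤ δ → ‖df x - df x₀‖ ≤ 1 / (2 * C))
    (x₁ : X) (hx₁ : ‖x₁ - x₀‖ ≤ δ / 8) (hfx₁ : ‖f x₁‖ ≤ δ / (4 * C)) :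
    ∃ x : X, (f x = 0 ∧ x - x₁ ∈ Set.range Q ∧ ‖x - x₀‖ ≤ δ) ∧
      ‖x - x₁‖ ≤ 2 * C * ‖f x₁‖ ∧
      ∀ x' : X, (f x' = 0 ∧ x' - x₁ ∈ Set.range Q ∧ ‖x' - x₀‖ ≤ δ) → x' = x := by
  set A := AffineSubspace.mk' x₁ (LinearMap.range (Q : Y →ₗ[ℝ] X))
  have hlip : LipschitzOnWith (1 / 2) (newtonMap Q f) (closedBall x₀ δ ∩ A) :=
    lipschitzOnWith_newtonMap hQright (convex_closedBall x₀ δ)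
      (fun x hx ↦ (hdf x (hball hx)).hasFDerivWithinAt)
      (fun x hx ↦ hquad x (mem_closedBall_iff_norm.1 hx))
      (calc ‖Q‖ * (1 / (2 * C)) ≤ C * (1 / (2 * C)) := by gcongr
        _ = ((1 / 2 : ℝ≥0) : ℝ) := by push_cast; field_simp) x₁
  set r := 2 * C * ‖f x₁‖
  have hr : closedBall x₁ r ⊆ closedBall x₀ δ := by
    refine closedBall_subset_closedBall' ?_
    have hrδ : r ≤ 2 * C * (δ / (4 * C)) := mul_le_mul_of_nonneg_left hfx₁ (by positivity)
    rw [dist_eq_norm]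
    field_simp at hrδ
    linarith [norm_nonneg (x₁ - x₀)]
  have hstart : dist (newtonMap Q f x₁) x₁ ≤ (1 - ((1 / 2 : ℝ≥0) : ℝ)) * r := calc
    _ ≤ ‖Q‖ * ‖f x₁‖ := dist_newtonMap_self_le x₁
    _ ≤ C * ‖f x₁‖ := by gcongr
    _ = _ := by push_cast; ring
  obtain ⟨x, ⟨hxr, hxA⟩, hfix⟩ := exists_isFixedPt_mem_closedBall_inter (by norm_num)
    (isClosed_mk'_range hQright x₁) (fun _ ↦ newtonMap_mem_mk')
    (hlip.mono (inter_subset_inter_left _ hr)) (AffineSubspace.self_mem_mk' _ _) hstart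
  refine ⟨x, ⟨(isFixedPt_newtonMap_iff hQright).1 hfix, hxA, mem_closedBall_iff_norm.1 (hr hxr)⟩,
    mem_closedBall_iff_norm.1 hxr, ?_⟩
  rintro x' ⟨hfx', hx'A, hx'⟩
  exact hlip.eq_of_isFixedPt (by norm_num) ⟨mem_closedBall_iff_norm.2 hx', hx'A⟩ ⟨hr hxr, hxA⟩
    ((isFixedPt_newtonMap_iff hQright).2 hfx') hfix

/-- Implicit function theorem with quantitative bounds (Theorem A.3.4 in McDuff–Salamon). -/
theorem stmt_0
    {X Y : Type*} [NormedAddCommGroup X] [NormedSpace ℝ X] [CompleteSpace X]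
    [NormedAddCommGroup Y] [NormedSpace ℝ Y] [CompleteSpace Y]
    (U : Set X) (hU : IsOpen U) (f : X → Y) (df : X → X →L[ℝ] Y)
    (hdf : ∀ x ∈ U, HasFDerivAt f (df x) x) (hdfc : ContinuousOn df U)
    (x₀ : X) (hx₀U : x₀ ∈ U)
    (hsurj : Function.Surjective (df x₀))
    (Q : Y →L[ℝ] X) (hQright : ∀ y : Y, df x₀ (Q y) = y)
    (δ C : ℝ) (hδ : 0 < δ) (hC : 0 < C)
    (hQnorm : ‖Q‖ ≤ C)
    (hball : Metric.closedBall x₀ δ ⊆ U)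
    (hquad : ∀ x : X, ‖x - x₀‖ ≤ δ → ‖df x - df x₀‖ ≤ 1 / (2 * C))
    (x₁ : X) (hx₁ : ‖x₁ - x₀‖ ≤ δ / 8) (hfx₁ : ‖f x₁‖ ≤ δ / (4 * C)) :
    ∃ x : X, (f x = 0 ∧ x - x₁ ∈ Set.range Q ∧ ‖x - x₀‖ ≤ δ) ∧
      ‖x - x₁‖ ≤ 2 * C * ‖f x₁‖ ∧
      ∀ x' : X, (f x' = 0 ∧ x' - x₁ ∈ Set.range Q ∧ ‖x' - x₀‖ ≤ δ) → x' = x :=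
  stmt_0_general U f df hdf x₀ Q hQright δ C hC hQnorm hball hquad x₁ hx₁ hfx₁
end

section
/- Let κ > 0 and a ∈ ℝ, and let f : ℝ → ℝ be twice differentiable on [a, ∞) with f(s) ≥ 0 and f″(s) ≥ κ²·f(s) for all s ≥ a, and with f(s) → 0 as s → ∞. Then f′(s) + κ·f(s) ≤ 0 for all s ≥ a, the function s ↦ e^{κs}·f(s) is antitone on [a, ∞), and consequently f(s) ≤ f(a)·e^{−κ(s−a)} for all s ≥ a. -/
/-!
Write `g = f' + κ f`. Then `g' - κ g = f'' - κ² f ≥ 0`, so `e^{-κ s} g(s)` is nondecreasing.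
If `g(s₀) > 0` for some `s₀`, this forces `g ≥ g(s₀) > 0` beyond `s₀`; since `κ f → 0`,
eventually `f' ≥ g(s₀) / 2`, so `f → ∞`, contradicting `f → 0`. Hence `g ≤ 0`, which says
exactly that `(e^{κ s} f(s))' = e^{κ s} g(s) ≤ 0`.
-/

open Real Filter Set

section

variable {a : ℝ} {f f' : ℝ → ℝ}

lemma monotoneOn_Ici_of_hasDerivAt_nonneg (hf : ∀ s, a ≤ s → HasDerivAt f (f' s) s)
    (hf'₀ : ∀ s, a ≤ s → 0 ≤ f' s) : MonotoneOn f (Ici a) :=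
  monotoneOn_of_hasDerivWithinAt_nonneg (convex_Ici a)
    (fun s hs => (hf s hs).continuousAt.continuousWithinAt)
    (fun s hs => (hf s (interior_subset hs)).hasDerivWithinAt)
    (fun s hs => hf'₀ s (interior_subset hs))

lemma antitoneOn_Ici_of_hasDerivAt_nonpos (hf : ∀ s, a ≤ s → HasDerivAt f (f' s) s)
    (hf'₀ : ∀ s, a ≤ s → f' s ≤ 0) : AntitoneOn f (Ici a) :=
  antitoneOn_of_hasDerivWithinAt_nonpos (convex_Ici a)
    (fun s hs => (hf s hs).continuousAt.continuousWithinAt)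
    (fun s hs => (hf s (interior_subset hs)).hasDerivWithinAt)
    (fun s hs => hf'₀ s (interior_subset hs))

lemma hasDerivAt_exp_mul_mul (κ : ℝ) {s : ℝ} (hf : HasDerivAt f (f' s) s) :
    HasDerivAt (fun s => exp (κ * s) * f s) (exp (κ * s) * (f' s + κ * f s)) s := by
  have hexp : HasDerivAt (fun s => exp (κ * s)) (exp (κ * s) * κ) s := by
    simpa using ((hasDerivAt_id s).const_mul κ).exp
  exact (hexp.mul hf).congr_deriv (by ring)

lemma antitoneOn_exp_mul_mul (κ : ℝ) (hf : ∀ s, a ≤ s → HasDerivAt f (f' s) s)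
    (h : ∀ s, a ≤ s → f' s + κ * f s ≤ 0) :
    AntitoneOn (fun s => exp (κ * s) * f s) (Ici a) :=
  antitoneOn_Ici_of_hasDerivAt_nonpos (fun s hs => hasDerivAt_exp_mul_mul κ (hf s hs))
    fun s hs => mul_nonpos_of_nonneg_of_nonpos (exp_pos _).le (h s hs)

lemma monotoneOn_exp_neg_mul_mul (κ : ℝ) (hf : ∀ s, a ≤ s → HasDerivAt f (f' s) s)
    (h : ∀ s, a ≤ s → κ * f s ≤ f' s) :
    MonotoneOn (fun s => exp (-κ * s) * f s) (Ici a) :=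
  monotoneOn_Ici_of_hasDerivAt_nonneg (fun s hs => hasDerivAt_exp_mul_mul (-κ) (hf s hs))
    fun s hs => mul_nonneg (exp_pos _).le (by linarith [h s hs])

lemma le_of_monotoneOn_exp_neg_mul_mul {κ : ℝ} (hκ : 0 ≤ κ)
    (h : MonotoneOn (fun s => exp (-κ * s) * f s) (Ici a)) {s₀ s : ℝ} (hs₀ : a ≤ s₀)
    (hs : s₀ ≤ s) (hf₀ : 0 ≤ f s₀) : f s₀ ≤ f s := by
  have hgrowth : exp (-κ * s₀) * f s₀ ≤ exp (-κ * s) * f s := h hs₀ (hs₀.trans hs) hs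
  have hexp : exp (-κ * s) ≤ exp (-κ * s₀) := exp_le_exp.2 (by nlinarith)
  refine le_of_mul_le_mul_left ?_ (exp_pos (-κ * s))
  calc exp (-κ * s) * f s₀ ≤ exp (-κ * s₀) * f s₀ := mul_le_mul_of_nonneg_right hexp hf₀
    _ ≤ exp (-κ * s) * f s := hgrowth

lemma le_mul_exp_neg_of_antitoneOn {κ : ℝ}
    (h : AntitoneOn (fun s => exp (κ * s) * f s) (Ici a)) {s : ℝ} (hs : a ≤ s) :
    f s ≤ f a * exp (-κ * (s - a)) := by
  have hdecay : exp (κ * s) * f s ≤ exp (κ * a) * f a := h self_mem_Ici hs hs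
  calc f s = exp (-κ * s) * (exp (κ * s) * f s) := by
        rw [← mul_assoc, ← exp_add, neg_mul, neg_add_cancel, exp_zero, one_mul]
    _ ≤ exp (-κ * s) * (exp (κ * a) * f a) :=
        mul_le_mul_of_nonneg_left hdecay (exp_pos _).le
    _ = f a * exp (-κ * (s - a)) := by
        rw [mul_comm (f a), ← mul_assoc, ← exp_add]
        congr 2
        ring

lemma tendsto_atTop_of_hasDerivAt_ge {ε : ℝ} (hε : 0 < ε)
    (hf : ∀ s, a ≤ s → HasDerivAt f (f' s) s) (h : ∀ s, a ≤ s → ε ≤ f' s) :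
    Tendsto f atTop atTop := by
  have hmono : MonotoneOn (fun s => f s - ε * s) (Ici a) :=
    monotoneOn_Ici_of_hasDerivAt_nonneg
      (fun s hs => ((hf s hs).sub ((hasDerivAt_id' s).const_mul ε)).congr_deriv (by rw [mul_one]))
      fun s hs => sub_nonneg.2 (h s hs)
  refine tendsto_atTop_mono' _ ?_
    (tendsto_atTop_add_const_left _ (f a - ε * a) (tendsto_id.const_mul_atTop hε))
  filter_upwards [eventually_ge_atTop a] with s hs
  have := hmono self_mem_Ici hs hs
  show f a - ε * a + ε * s ≤ f s
  linarith

theorem deriv_add_mul_nonpos_of_tendsto_zero {κ : ℝ} (hκ : 0 < κ) {f'' : ℝ → ℝ}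
    (hd1 : ∀ s, a ≤ s → HasDerivAt f (f' s) s)
    (hd2 : ∀ s, a ≤ s → HasDerivAt f' (f'' s) s)
    (hconv : ∀ s, a ≤ s → κ ^ 2 * f s ≤ f'' s) (hlim : Tendsto f atTop (nhds 0)) :
    ∀ s, a ≤ s → f' s + κ * f s ≤ 0 := by
  intro s₀ hs₀
  by_contra! hc_pos
  set c := f' s₀ + κ * f s₀
  have hmono : MonotoneOn (fun s => exp (-κ * s) * (f' s + κ * f s)) (Ici a) :=
    monotoneOn_exp_neg_mul_mul κ (fun s hs => (hd2 s hs).add ((hd1 s hs).const_mul κ))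
      fun s hs => by linarith [hconv s hs]
  obtain ⟨s₁, hs₁⟩ := eventually_atTop.1
    (hlim.eventually (gt_mem_nhds (by positivity : 0 < c / (2 * κ))))
  have hf'_ge : ∀ s, max s₀ s₁ ≤ s → c / 2 ≤ f' s := by
    intro s hs
    have hc : c ≤ f' s + κ * f s :=
      le_of_monotoneOn_exp_neg_mul_mul hκ.le hmono hs₀ (le_of_max_le_left hs) hc_pos.le
    have hsmall : κ * f s < c / 2 := by
      have := mul_lt_mul_of_pos_left (hs₁ s (le_of_max_le_right hs)) hκ
      rwa [mul_div_assoc', mul_comm 2 κ, mul_div_mul_left _ _ hκ.ne'] at this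
    linarith
  exact not_tendsto_atTop_of_tendsto_nhds hlim <| tendsto_atTop_of_hasDerivAt_ge (half_pos hc_pos)
    (fun s hs => hd1 s (hs₀.trans ((le_max_left _ _).trans hs))) hf'_ge

end

theorem stmt_4_general
    (κ a : ℝ) (hκ : 0 < κ) (f f' f'' : ℝ → ℝ)
    (hd1 : ∀ s, a ≤ s → HasDerivAt f (f' s) s)
    (hd2 : ∀ s, a ≤ s → HasDerivAt f' (f'' s) s)
    (hconv : ∀ s, a ≤ s → κ ^ 2 * f s ≤ f'' s)
    (hlim : Filter.Tendsto f Filter.atTop (nhds 0)) :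
    (∀ s, a ≤ s → f' s + κ * f s ≤ 0) ∧
    AntitoneOn (fun s => Real.exp (κ * s) * f s) (Set.Ici a) ∧
    (∀ s, a ≤ s → f s ≤ f a * Real.exp (-κ * (s - a))) := by
  have hg := deriv_add_mul_nonpos_of_tendsto_zero hκ hd1 hd2 hconv hlim
  have hanti := antitoneOn_exp_mul_mul κ hd1 hg
  exact ⟨hg, hanti, fun s hs => le_mul_exp_neg_of_antitoneOn hanti hs⟩

/-- Exponential decay from convexity: if `f ≥ 0`, `f'' ≥ κ²·f` on `[a, ∞)` and `f → 0`
at infinity, then `f' + κ·f ≤ 0` on `[a, ∞)`, `s ↦ e^{κs}·f(s)` is antitone on `[a, ∞)`,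
and `f(s) ≤ f(a)·e^{−κ(s−a)}` for all `s ≥ a`. -/
theorem stmt_4
    (κ a : ℝ) (hκ : 0 < κ) (f f' f'' : ℝ → ℝ)
    (hd1 : ∀ s, a ≤ s → HasDerivAt f (f' s) s)
    (hd2 : ∀ s, a ≤ s → HasDerivAt f' (f'' s) s)
    (hpos : ∀ s, a ≤ s → 0 ≤ f s)
    (hconv : ∀ s, a ≤ s → κ ^ 2 * f s ≤ f'' s)
    (hlim : Filter.Tendsto f Filter.atTop (nhds 0)) :
    (∀ s, a ≤ s → f' s + κ * f s ≤ 0) ∧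
    AntitoneOn (fun s => Real.exp (κ * s) * f s) (Set.Ici a) ∧
    (∀ s, a ≤ s → f s ≤ f a * Real.exp (-κ * (s - a))) :=
  stmt_4_general κ a hκ f f' f'' hd1 hd2 hconv hlim
end

section
/- Let κ > 0 and ρ > 0, and let f : ℝ → ℝ be twice continuously differentiable on [−ρ, ρ] with f(s) ≥ 0 and f″(s) ≥ κ²·f(s) for all s ∈ [−ρ, ρ]. Define E(T) := ∫_{−ρ+T}^{ρ−T} f(s) ds for T ∈ [0, ρ]. Then E(T) ≤ e^{−κT}·E(0) for all T ∈ [0, ρ]. -/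
/-!
With `E(T) = ∫_{-ρ+T}^{ρ-T} f` one has `E' = -f(ρ-T) - f(-ρ+T)` and
`E'' = f'(ρ-T) - f'(-ρ+T) ≥ κ² E`, because `f' - κ² ∫ f` is nondecreasing. Then `h = E' + κE`
satisfies `h' ≥ κh` and `h(ρ) = -2 f(0) ≤ 0`, so `e^{-κT} h` is nondecreasing and `h ≤ 0`
on `[0, ρ]`. That is `(e^{κT} E)' ≤ 0`, hence `e^{κT} E(T) ≤ E(0)`.
-/

open Set Real MeasureTheory

theorem antitoneOn_exp_mul_of_mul_add_deriv_nonpos {g g' : ℝ → ℝ} {a b c : ℝ}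
    (hg : ContinuousOn g (Icc a b)) (hdg : ∀ t ∈ Ioo a b, HasDerivAt g (g' t) t)
    (hle : ∀ t ∈ Ioo a b, c * g t + g' t ≤ 0) :
    AntitoneOn (fun t => exp (c * t) * g t) (Icc a b) := by
  refine antitoneOn_of_hasDerivWithinAt_nonpos (convex_Icc a b)
    ((continuous_exp.comp (continuous_const_mul c)).continuousOn.mul hg)
    (f' := fun t => exp (c * t) * (c * g t + g' t)) (fun t ht => ?_) (fun t ht => ?_) <;>
    rw [interior_Icc] at ht
  · have hexp : HasDerivAt (fun t => exp (c * t)) (exp (c * t) * c) t := by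
      simpa using ((hasDerivAt_id t).const_mul c).exp
    exact ((hexp.mul (hdg t ht)).congr_deriv (by ring)).hasDerivWithinAt
  · exact mul_nonpos_of_nonneg_of_nonpos (exp_pos _).le (hle t ht)

theorem nonpos_of_mul_le_deriv {h h' : ℝ → ℝ} {a b c t : ℝ}
    (hh : ContinuousOn h (Icc a b)) (hdh : ∀ t ∈ Ioo a b, HasDerivAt h (h' t) t)
    (hle : ∀ t ∈ Ioo a b, c * h t ≤ h' t) (hb : h b ≤ 0) (ht : t ∈ Icc a b) : h t ≤ 0 := by
  have hanti := antitoneOn_exp_mul_of_mul_add_deriv_nonpos (c := -c) hh.neg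
    (fun s hs => (hdh s hs).neg) (fun s hs => by simp only [Pi.neg_apply]; linarith [hle s hs])
  have hbt : exp (-c * b) * -h b ≤ exp (-c * t) * -h t :=
    hanti ht (right_mem_Icc.2 (ht.1.trans ht.2)) ht.2
  have : 0 ≤ exp (-c * t) * -h t := (mul_nonneg (exp_pos _).le (neg_nonneg.2 hb)).trans hbt
  exact neg_nonneg.1 (nonneg_of_mul_nonneg_right this (exp_pos _))

theorem le_exp_neg_mul_of_mul_add_deriv_nonpos {g g' : ℝ → ℝ} {a b c t : ℝ}
    (hg : ContinuousOn g (Icc a b)) (hdg : ∀ t ∈ Ioo a b, HasDerivAt g (g' t) t)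
    (hle : ∀ t ∈ Ioo a b, c * g t + g' t ≤ 0) (ht : t ∈ Icc a b) :
    g t ≤ exp (-c * (t - a)) * g a := by
  have hat : exp (c * t) * g t ≤ exp (c * a) * g a :=
    antitoneOn_exp_mul_of_mul_add_deriv_nonpos hg hdg hle (left_mem_Icc.2 (ht.1.trans ht.2))
      ht ht.1
  calc g t = exp (-c * t) * (exp (c * t) * g t) := by
        rw [← mul_assoc, ← exp_add]; simp
    _ ≤ exp (-c * t) * (exp (c * a) * g a) := mul_le_mul_of_nonneg_left hat (exp_pos _).le
    _ = exp (-c * (t - a)) * g a := by rw [← mul_assoc, ← exp_add]; ring_nf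

theorem le_exp_neg_mul_of_sq_mul_le_deriv_deriv {E E' E'' : ℝ → ℝ} {a b κ t : ℝ}
    (hE : ContinuousOn E (Icc a b)) (hE' : ContinuousOn E' (Icc a b))
    (hdE : ∀ t ∈ Ioo a b, HasDerivAt E (E' t) t)
    (hdE' : ∀ t ∈ Ioo a b, HasDerivAt E' (E'' t) t)
    (hE'' : ∀ t ∈ Ioo a b, κ ^ 2 * E t ≤ E'' t)
    (hb : κ * E b + E' b ≤ 0) (ht : t ∈ Icc a b) :
    E t ≤ exp (-κ * (t - a)) * E a := by
  have hmix : ∀ s ∈ Icc a b, κ * E s + E' s ≤ 0 := fun s hs =>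
    nonpos_of_mul_le_deriv (h := fun s => κ * E s + E' s) (c := κ)
      ((hE.const_smul κ).add hE')
      (fun s hs => ((hdE s hs).const_mul κ).add (hdE' s hs))
      (fun s hs => by linear_combination hE'' s hs) hb hs
  exact le_exp_neg_mul_of_mul_add_deriv_nonpos hE hdE
    (fun s hs => hmix s (Ioo_subset_Icc_self hs)) ht

theorem monotoneOn_sub_of_deriv_le {u u' v v' : ℝ → ℝ} {a b : ℝ}
    (hu : ContinuousOn u (Icc a b)) (hv : ContinuousOn v (Icc a b))
    (hdu : ∀ x ∈ Ioo a b, HasDerivAt u (u' x) x) (hdv : ∀ x ∈ Ioo a b, HasDerivAt v (v' x) x)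
    (hle : ∀ x ∈ Ioo a b, v' x ≤ u' x) :
    MonotoneOn (fun x => u x - v x) (Icc a b) :=
  monotoneOn_of_hasDerivWithinAt_nonneg (convex_Icc a b) (hu.sub hv)
    (fun x hx => by rw [interior_Icc] at hx; exact ((hdu x hx).sub (hdv x hx)).hasDerivWithinAt)
    (fun x hx => by rw [interior_Icc] at hx; exact sub_nonneg.2 (hle x hx))

theorem hasDerivAt_integral_of_continuousOn {f : ℝ → ℝ} {a b x : ℝ}
    (hf : ContinuousOn f (Icc a b)) (hx : x ∈ Ioo a b) :
    HasDerivAt (fun u => ∫ s in a..u, f s) (f x) x :=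
  intervalIntegral.integral_hasDerivAt_right
    (hf.mono (uIcc_subset_Icc (left_mem_Icc.2 (hx.1.trans hx.2).le)
      (Ioo_subset_Icc_self hx))).intervalIntegrable
    ((hf.mono Ioo_subset_Icc_self).stronglyMeasurableAtFilter isOpen_Ioo x hx)
    (hf.continuousAt (Icc_mem_nhds hx.1 hx.2))

theorem continuousOn_integral_of_continuousOn {f : ℝ → ℝ} {a b : ℝ} (hab : a ≤ b)
    (hf : ContinuousOn f (Icc a b)) :
    ContinuousOn (fun u => ∫ s in a..u, f s) (Icc a b) := by
  simpa [uIcc_of_le hab] using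
    intervalIntegral.continuousOn_primitive_interval (μ := volume) (a := a) (b := b)
      (by rw [uIcc_of_le hab]; exact hf.integrableOn_Icc)

section Window

variable {ρ T : ℝ}

theorem window_mem_Ioo (hT : T ∈ Ioo 0 ρ) : ρ - T ∈ Ioo (-ρ) ρ ∧ -ρ + T ∈ Ioo (-ρ) ρ := by
  obtain ⟨h₀, h₁⟩ := hT
  exact ⟨⟨by linarith, by linarith⟩, ⟨by linarith, by linarith⟩⟩

theorem window_mem_Icc (hT : T ∈ Icc 0 ρ) : ρ - T ∈ Icc (-ρ) ρ ∧ -ρ + T ∈ Icc (-ρ) ρ := by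
  obtain ⟨h₀, h₁⟩ := hT
  exact ⟨⟨by linarith, by linarith⟩, ⟨by linarith, by linarith⟩⟩

theorem ContinuousOn.window_sub {u v : ℝ → ℝ} (hv : ContinuousOn v (Icc (-ρ) ρ))
    (hu : ContinuousOn u (Icc (-ρ) ρ)) :
    ContinuousOn (fun T => v (ρ - T) - u (-ρ + T)) (Icc 0 ρ) :=
  (hv.comp (continuous_sub_left ρ).continuousOn fun _ hT => (window_mem_Icc hT).1).sub
    (hu.comp (continuous_const_add (-ρ)).continuousOn fun _ hT => (window_mem_Icc hT).2)

theorem hasDerivAt_window_sub {u v u' v' : ℝ → ℝ}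
    (hv : ∀ x ∈ Ioo (-ρ) ρ, HasDerivAt v (v' x) x) (hu : ∀ x ∈ Ioo (-ρ) ρ, HasDerivAt u (u' x) x)
    (hT : T ∈ Ioo 0 ρ) :
    HasDerivAt (fun T => v (ρ - T) - u (-ρ + T)) (-v' (ρ - T) - u' (-ρ + T)) T :=
  ((hv _ (window_mem_Ioo hT).1).comp_const_sub ρ T).sub
    ((hu _ (window_mem_Ioo hT).2).comp_const_add (-ρ) T)

end Window

theorem window_sub_le_exp_neg_mul {F f f' f'' : ℝ → ℝ} {κ ρ T : ℝ}
    (hF : ContinuousOn F (Icc (-ρ) ρ)) (hdF : ∀ x ∈ Ioo (-ρ) ρ, HasDerivAt F (f x) x)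
    (hf : ContinuousOn f (Icc (-ρ) ρ)) (hdf : ∀ x ∈ Ioo (-ρ) ρ, HasDerivAt f (f' x) x)
    (hf' : ContinuousOn f' (Icc (-ρ) ρ)) (hdf' : ∀ x ∈ Ioo (-ρ) ρ, HasDerivAt f' (f'' x) x)
    (hconv : ∀ x ∈ Ioo (-ρ) ρ, κ ^ 2 * f x ≤ f'' x) (hf₀ : 0 ≤ f 0) (hT : T ∈ Icc 0 ρ) :
    F (ρ - T) - F (-ρ + T) ≤ exp (-κ * T) * (F ρ - F (-ρ)) := by
  have hmono : MonotoneOn (fun x => f' x - κ ^ 2 * F x) (Icc (-ρ) ρ) :=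
    monotoneOn_sub_of_deriv_le hf' (hF.const_smul (κ ^ 2)) hdf'
      (fun x hx => (hdF x hx).const_mul _) hconv
  have hE := le_exp_neg_mul_of_sq_mul_le_deriv_deriv (a := 0) (b := ρ) (κ := κ)
    (E := fun t => F (ρ - t) - F (-ρ + t)) (E' := fun t => -f (ρ - t) - f (-ρ + t))
    (E'' := fun t => f' (ρ - t) - f' (-ρ + t)) (hF.window_sub hF) (hf.neg.window_sub hf)
    (fun t ht => (hasDerivAt_window_sub hdF hdF ht).congr_deriv (by ring))
    (fun t ht => (hasDerivAt_window_sub (fun x hx => (hdf x hx).neg) hdf ht).congr_deriv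
      (by ring))
    (fun t ht => by
      have := hmono (Ioo_subset_Icc_self (window_mem_Ioo ht).2)
        (Ioo_subset_Icc_self (window_mem_Ioo ht).1) (by linarith [ht.2])
      simp only at this ⊢
      linarith)
    (by simp only [sub_self, neg_add_cancel, mul_zero, zero_add]; linarith) hT
  simpa using hE

theorem stmt_6_general
    (κ ρ : ℝ) (f f' f'' : ℝ → ℝ)
    (hd1 : ∀ s ∈ Set.Icc (-ρ) ρ, HasDerivAt f (f' s) s)
    (hd2 : ∀ s ∈ Set.Icc (-ρ) ρ, HasDerivAt f' (f'' s) s)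
    (hpos : ∀ s ∈ Set.Icc (-ρ) ρ, 0 ≤ f s)
    (hconv : ∀ s ∈ Set.Icc (-ρ) ρ, κ ^ 2 * f s ≤ f'' s) :
    ∀ T ∈ Set.Icc 0 ρ,
      (∫ s in (-ρ + T)..(ρ - T), f s) ≤ Real.exp (-κ * T) * ∫ s in (-ρ)..ρ, f s := by
  intro T hT
  have hρ : -ρ ≤ ρ := by linarith [hT.1, hT.2]
  have hf : ContinuousOn f (Icc (-ρ) ρ) := fun s hs => (hd1 s hs).continuousAt.continuousWithinAt
  have hf' : ContinuousOn f' (Icc (-ρ) ρ) :=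
    fun s hs => (hd2 s hs).continuousAt.continuousWithinAt
  have hint : ∀ x ∈ Icc (-ρ) ρ, IntervalIntegrable f volume (-ρ) x := fun x hx =>
    (hf.mono (uIcc_subset_Icc (left_mem_Icc.2 hρ) hx)).intervalIntegrable
  have hE := window_sub_le_exp_neg_mul (κ := κ) (continuousOn_integral_of_continuousOn hρ hf)
    (fun x hx => hasDerivAt_integral_of_continuousOn hf hx) hf
    (fun x hx => hd1 x (Ioo_subset_Icc_self hx)) hf' (fun x hx => hd2 x (Ioo_subset_Icc_self hx))
    (fun x hx => hconv x (Ioo_subset_Icc_self hx)) (hpos 0 ⟨by linarith, by linarith⟩) hT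
  rw [← intervalIntegral.integral_interval_sub_left (hint _ (window_mem_Icc hT).1)
    (hint _ (window_mem_Icc hT).2)]
  simpa using hE

/-- Exponential decay of the energy of the middle portion of a strip: if `f ≥ 0` and
`f'' ≥ κ²·f` on `[−ρ, ρ]`, then `E(T) := ∫_{−ρ+T}^{ρ−T} f ≤ e^{−κT}·E(0)` for
`T ∈ [0, ρ]`. -/
theorem stmt_6
    (κ ρ : ℝ) (hκ : 0 < κ) (hρ : 0 < ρ) (f f' f'' : ℝ → ℝ)
    (hd1 : ∀ s ∈ Set.Icc (-ρ) ρ, HasDerivAt f (f' s) s)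
    (hd2 : ∀ s ∈ Set.Icc (-ρ) ρ, HasDerivAt f' (f'' s) s)
    (hcont : ContinuousOn f'' (Set.Icc (-ρ) ρ))
    (hpos : ∀ s ∈ Set.Icc (-ρ) ρ, 0 ≤ f s)
    (hconv : ∀ s ∈ Set.Icc (-ρ) ρ, κ ^ 2 * f s ≤ f'' s) :
    ∀ T ∈ Set.Icc 0 ρ,
      (∫ s in (-ρ + T)..(ρ - T), f s) ≤ Real.exp (-κ * T) * ∫ s in (-ρ)..ρ, f s :=
  stmt_6_general κ ρ f f' f'' hd1 hd2 hpos hconv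
end

section
/- Let p > 2, let r_c > 0 and θ_c ∈ (0, π), and let Ω ⊆ ℝ² be a measurable set satisfying the cone condition for the finite cone C(r_c, θ_c). Then there is a constant c > 0, depending only on r_c, θ_c and p, such that for every function f : ℝ² → ℝ that is smooth on Ω and has finite W^{1,p}-norm on Ω, and for every x ∈ Ω, one has |f(x)| ≤ c·‖f‖_{W^{1,p}(Ω)}. -/
open MeasureTheory

/-- The closed finite cone in `ℝ²` with vertex `0`, radius `r` and opening angle `θ`:
points of norm at most `r` whose angle with the first coordinate axis is at most `θ`. -/
def finiteCone (r θ : ℝ) : Set (EuclideanSpace ℝ (Fin 2)) :=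
  {x | ‖x‖ ≤ r ∧ ‖x‖ * Real.cos θ ≤ x 0}

/-- A set `Ω ⊆ ℝ²` satisfies the cone condition for `C(r, θ)` if every `x ∈ Ω` is the
vertex of a cone congruent to `C(r, θ)` contained in `Ω`. -/
def ConeCondition (r θ : ℝ) (Ω : Set (EuclideanSpace ℝ (Fin 2))) : Prop :=
  ∀ x ∈ Ω, ∃ ρ : EuclideanSpace ℝ (Fin 2) →ₗᵢ[ℝ] EuclideanSpace ℝ (Fin 2),
    (fun y => x + ρ y) '' finiteCone r θ ⊆ Ω

open Set

noncomputable section SobolevAux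

/-- Auxiliary linear embedding of `ℝ × ℝ` into `EuclideanSpace ℝ (Fin 2)`. -/
def planeMap : ℝ × ℝ →L[ℝ] EuclideanSpace ℝ (Fin 2) :=
  (ContinuousLinearMap.fst ℝ ℝ ℝ).smulRight (EuclideanSpace.single 0 1) +
  (ContinuousLinearMap.snd ℝ ℝ ℝ).smulRight (EuclideanSpace.single 1 1)

lemma planeMap_apply0 (v : ℝ × ℝ) : planeMap v 0 = v.1 := by
  simp [planeMap, EuclideanSpace.single_apply]

lemma planeMap_apply1 (v : ℝ × ℝ) : planeMap v 1 = v.2 := by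
  simp [planeMap, EuclideanSpace.single_apply]

lemma planeMap_norm (v : ℝ × ℝ) : ‖planeMap v‖ = Real.sqrt (v.1 ^ 2 + v.2 ^ 2) := by
  rw [EuclideanSpace.norm_eq]
  congr 1
  rw [Fin.sum_univ_two, planeMap_apply0, planeMap_apply1]
  simp [Real.norm_eq_abs, sq_abs]

/-- `planeMap` as a measurable equivalence. -/
def planeEquiv : (ℝ × ℝ) ≃ᵐ EuclideanSpace ℝ (Fin 2) :=
  (MeasurableEquiv.finTwoArrow (α := ℝ)).symm.trans
    (MeasurableEquiv.toLp 2 (Fin 2 → ℝ))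

lemma planeEquiv_eq : ⇑planeEquiv = ⇑planeMap := by
  funext v
  ext i
  have h0 : planeEquiv v i = (![v.1, v.2] : Fin 2 → ℝ) i := by
    simp only [planeEquiv, MeasurableEquiv.coe_trans, Function.comp_apply]
    rw [MeasurableEquiv.coe_toLp]
    rw [show ((MeasurableEquiv.finTwoArrow (α := ℝ)).symm v) = ![v.1, v.2] by
      simp only [MeasurableEquiv.finTwoArrow]
      funext j; fin_cases j <;> rfl]
  rw [h0]
  fin_cases i
  · simp [planeMap_apply0]
  · simp [planeMap_apply1]

lemma planeMap_measurePreserving : MeasurePreserving (⇑planeMap) volume volume := by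
  rw [← planeEquiv_eq]
  have h1 := (MeasureTheory.volume_preserving_finTwoArrow ℝ).symm MeasurableEquiv.finTwoArrow
  have h2 := (EuclideanSpace.volume_preserving_symm_measurableEquiv_toLp (Fin 2)).symm
    (MeasurableEquiv.toLp 2 (Fin 2 → ℝ)).symm
  have := h2.comp h1
  simpa [planeEquiv, MeasurableEquiv.coe_trans] using this

end SobolevAux

set_option maxHeartbeats 2000000 in
/-- `W^{1,p}` Sobolev embedding (`p > 2`) for planar domains satisfying a cone condition,
with a constant depending only on the cone and `p`. -/
theorem stmt_7
    (p rc θc : ℝ) (hp : 2 < p) (hrc : 0 < rc) (hθ0 : 0 < θc) (hθπ : θc < Real.pi) :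
    ∃ c : ℝ, 0 < c ∧
      ∀ Ω : Set (EuclideanSpace ℝ (Fin 2)), MeasurableSet Ω → ConeCondition rc θc Ω →
        ∀ f : EuclideanSpace ℝ (Fin 2) → ℝ,
        ∀ Df : EuclideanSpace ℝ (Fin 2) → (EuclideanSpace ℝ (Fin 2) →L[ℝ] ℝ),
          ContDiffOn ℝ (⊤ : ℕ∞) f Ω →
          (∀ x ∈ Ω, HasFDerivWithinAt f (Df x) Ω x) →
          IntegrableOn (fun x => |f x| ^ p + ‖Df x‖ ^ p) Ω →
          ∀ x ∈ Ω, |f x| ≤ c * (∫ y in Ω, (|f y| ^ p + ‖Df y‖ ^ p)) ^ (1 / p) := by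
  classical
  have hπ3 : (3:ℝ) < Real.pi := Real.pi_gt_three
  -- shrink the cone angle
  set θ : ℝ := min θc 1 with hθdef
  have hθpos : 0 < θ := lt_min hθ0 one_pos
  have hθ1 : θ ≤ 1 := min_le_right _ _
  have hθc : θ ≤ θc := min_le_left _ _
  have hθπ' : θ < Real.pi := by nlinarith
  have hθpi : θ ≤ Real.pi := hθπ'.le
  have hcosθlt : Real.cos θ < 1 := by
    have := Real.cos_lt_cos_of_nonneg_of_le_pi (le_refl 0) (by nlinarith) hθpos
    simpa using this
  have hcosθ0 : 0 ≤ Real.cos θ := by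
    have := Real.cos_nonneg_of_mem_Icc (x := θ) ⟨by nlinarith, by nlinarith [Real.pi_gt_three]⟩
    exact this
  -- conjugate exponent
  set q : ℝ := Real.conjExponent p with hqdef
  have hp1 : 1 < p := by linarith
  have hpq : p.HolderConjugate q := Real.HolderConjugate.conjExponent hp1
  have hq1 : 1 < q := hpq.symm.lt
  have hq2 : q < 2 := by
    rw [hqdef, Real.conjExponent]
    rw [div_lt_iff₀ (by linarith)]
    linarith
  have hqne : q ≠ 0 := by positivity
  have hpne : p ≠ 0 := by positivity
  -- the constants
  set NV : ENNReal := volume (Ioo (-θ) θ) with hNVdef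
  set AR : ENNReal := ∫⁻ r in Ioc (0:ℝ) rc, ENNReal.ofReal r with hARdef
  set BR : ENNReal := ∫⁻ r in Ioc (0:ℝ) rc, ENNReal.ofReal r ^ (1 - q) with hBRdef
  set A : ENNReal := AR * NV with hAdef
  have hNV : NV = ENNReal.ofReal (2*θ) := by
    rw [hNVdef, Real.volume_Ioo]; congr 1; ring
  have hNVpos : NV ≠ 0 := by
    rw [hNV]; simp [ENNReal.ofReal_eq_zero]; linarith
  have hNVtop : NV ≠ ⊤ := by rw [hNV]; exact ENNReal.ofReal_ne_top
  have hARtop : AR ≠ ⊤ := by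
    have hb : AR ≤ ∫⁻ _ in Ioc (0:ℝ) rc, ENNReal.ofReal rc := by
      apply setLIntegral_mono' measurableSet_Ioc
      intro r hr
      exact ENNReal.ofReal_le_ofReal hr.2
    have : (∫⁻ _ in Ioc (0:ℝ) rc, ENNReal.ofReal rc) = ENNReal.ofReal rc * volume (Ioc (0:ℝ) rc) := by
      rw [setLIntegral_const]
    rw [this] at hb
    refine ne_top_of_le_ne_top (ENNReal.mul_ne_top ENNReal.ofReal_ne_top ?_) hb
    rw [Real.volume_Ioc]
    exact ENNReal.ofReal_ne_top
  have hARpos : AR ≠ 0 := by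
    have hsub : Ioc (rc/2) rc ⊆ Ioc (0:ℝ) rc := Ioc_subset_Ioc (by linarith) le_rfl
    have hb : (∫⁻ _ in Ioc (rc/2) rc, ENNReal.ofReal (rc/2)) ≤ AR := by
      refine le_trans ?_ (lintegral_mono_set hsub)
      apply setLIntegral_mono' measurableSet_Ioc
      intro r hr
      exact ENNReal.ofReal_le_ofReal hr.1.le
    rw [setLIntegral_const, Real.volume_Ioc] at hb
    intro h0
    rw [h0] at hb
    have : ENNReal.ofReal (rc/2) * ENNReal.ofReal (rc - rc/2) = 0 := le_antisymm hb zero_le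
    rcases mul_eq_zero.1 this with h | h <;>
      simp [ENNReal.ofReal_eq_zero] at h <;> linarith
  have hBRtop : BR ≠ ⊤ := by
    have hIoc : BR = ∫⁻ r in Ioo (0:ℝ) rc, ENNReal.ofReal r ^ (1 - q) := by
      rw [hBRdef, setLIntegral_congr (MeasureTheory.Ioo_ae_eq_Ioc (a := (0:ℝ)) (b := rc)).symm]
    have hcong : (∫⁻ r in Ioo (0:ℝ) rc, ENNReal.ofReal r ^ (1 - q))
        = ∫⁻ r in Ioo (0:ℝ) rc, ENNReal.ofReal (r ^ (1 - q)) := by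
      apply setLIntegral_congr_fun measurableSet_Ioo
      intro r hr
      dsimp only
      rw [← ENNReal.ofReal_rpow_of_pos hr.1]
    have hint : IntegrableOn (fun r : ℝ => r ^ (1 - q)) (Ioo (0:ℝ) rc) := by
      rw [intervalIntegral.integrableOn_Ioo_rpow_iff hrc]
      linarith
    have heq : (∫⁻ r in Ioo (0:ℝ) rc, ENNReal.ofReal (r ^ (1 - q)))
        = ENNReal.ofReal (∫ r in Ioo (0:ℝ) rc, r ^ (1 - q)) := by
      rw [MeasureTheory.ofReal_integral_eq_lintegral_ofReal hint]
      filter_upwards [ae_restrict_mem measurableSet_Ioo] with r hr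
      exact Real.rpow_nonneg hr.1.le _
    rw [hIoc, hcong, heq]
    exact ENNReal.ofReal_ne_top
  have hApos : A ≠ 0 := by
    simp [hAdef, hARpos, hNVpos]
  have hAtop : A ≠ ⊤ := ENNReal.mul_ne_top hARtop hNVtop
  set Ktot : ENNReal := A ^ (1/q) + AR * (BR * NV) ^ (1/q) with hKdef
  have hKtop : Ktot ≠ ⊤ := by
    have h1 : A ^ (1/q) ≠ ⊤ := ENNReal.rpow_ne_top_of_nonneg (by positivity) hAtop
    have h2 : (BR * NV) ^ (1/q) ≠ ⊤ :=
      ENNReal.rpow_ne_top_of_nonneg (by positivity) (ENNReal.mul_ne_top hBRtop hNVtop)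
    simp only [hKdef, Ne, ENNReal.add_eq_top, not_or]
    exact ⟨h1, ENNReal.mul_ne_top hARtop h2⟩
  set cE : ENNReal := A⁻¹ * Ktot with hcEdef
  have hcEtop : cE ≠ ⊤ := ENNReal.mul_ne_top (by simp [ENNReal.inv_ne_top, hApos]) hKtop
  refine ⟨cE.toReal + 1, by positivity, ?_⟩
  intro Ω hΩm hCC f Df hf hDf hInt x hx
  set I : ℝ := ∫ y in Ω, (|f y| ^ p + ‖Df y‖ ^ p) with hIdef
  have hI0 : 0 ≤ I := by
    apply setIntegral_nonneg hΩm
    intro y _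
    have := Real.rpow_nonneg (abs_nonneg (f y)) p
    have := Real.rpow_nonneg (norm_nonneg (Df y)) p
    linarith
  -- the cone at x
  obtain ⟨ρ, hρ⟩ := hCC x hx
  have hρsurj : Function.Surjective ⇑ρ := by
    have : Function.Injective ρ.toLinearMap := ρ.injective
    exact LinearMap.injective_iff_surjective.mp this
  set ρe : EuclideanSpace ℝ (Fin 2) ≃ₗᵢ[ℝ] EuclideanSpace ℝ (Fin 2) :=
    LinearIsometryEquiv.ofSurjective ρ hρsurj with hρedef
  have hρe : ⇑ρe = ⇑ρ := LinearIsometryEquiv.coe_ofSurjective ρ hρsurj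
  have hconeSub : finiteCone rc θ ⊆ finiteCone rc θc := by
    intro v hv
    refine ⟨hv.1, le_trans ?_ hv.2⟩
    have hcc : Real.cos θc ≤ Real.cos θ :=
      Real.cos_le_cos_of_nonneg_of_le_pi hθpos.le hθπ.le hθc
    exact mul_le_mul_of_nonneg_left hcc (norm_nonneg v)
  set K : Set (EuclideanSpace ℝ (Fin 2)) := finiteCone rc θ with hKsetdef
  set C : Set (EuclideanSpace ℝ (Fin 2)) := (fun y => x + ρ y) '' K with hCdef
  have hCΩ : C ⊆ Ω := Subset.trans (image_mono hconeSub) hρ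
  have h0K : (0 : EuclideanSpace ℝ (Fin 2)) ∈ K := by
    refine ⟨by simp [hrc.le], by simp⟩
  have hxC : x ∈ C := ⟨0, h0K, by simp⟩
  -- convexity, compactness, unique differentiability of C
  have hKconv : Convex ℝ K := by
    intro v hv w hw a b ha hb hab
    have hn : ‖a • v + b • w‖ ≤ a * ‖v‖ + b * ‖w‖ := by
      calc ‖a • v + b • w‖ ≤ ‖a • v‖ + ‖b • w‖ := norm_add_le _ _
        _ = a * ‖v‖ + b * ‖w‖ := by
            rw [norm_smul, norm_smul, Real.norm_of_nonneg ha, Real.norm_of_nonneg hb]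
    constructor
    · calc ‖a • v + b • w‖ ≤ a * ‖v‖ + b * ‖w‖ := hn
        _ ≤ a * rc + b * rc := by nlinarith [hv.1, hw.1, norm_nonneg v, norm_nonneg w]
        _ = rc := by rw [← add_mul, hab, one_mul]
    · have he : (a • v + b • w) 0 = a * v 0 + b * w 0 := by
        simp [PiLp.add_apply, PiLp.smul_apply, smul_eq_mul]
      rw [he]
      have h1 : ‖a • v + b • w‖ * Real.cos θ ≤ (a * ‖v‖ + b * ‖w‖) * Real.cos θ :=
        mul_le_mul_of_nonneg_right hn hcosθ0
      have h3 : a * (‖v‖ * Real.cos θ) ≤ a * (v 0) := mul_le_mul_of_nonneg_left hv.2 ha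
      have h4 : b * (‖w‖ * Real.cos θ) ≤ b * (w 0) := mul_le_mul_of_nonneg_left hw.2 hb
      nlinarith
  have hproj : Continuous (fun v : EuclideanSpace ℝ (Fin 2) => v 0) :=
    (EuclideanSpace.proj (0 : Fin 2) (𝕜 := ℝ)).continuous
  have hKclosed : IsClosed K := by
    have : K = {v : EuclideanSpace ℝ (Fin 2) | ‖v‖ ≤ rc} ∩
        {v : EuclideanSpace ℝ (Fin 2) | ‖v‖ * Real.cos θ ≤ v 0} := rfl
    rw [this]
    exact (isClosed_le continuous_norm continuous_const).inter
      (isClosed_le (continuous_norm.mul continuous_const) hproj)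
  have hKcompact : IsCompact K := by
    refine (isCompact_closedBall (0 : EuclideanSpace ℝ (Fin 2)) rc).of_isClosed_subset hKclosed ?_
    intro v hv
    simpa [Metric.mem_closedBall, dist_eq_norm] using hv.1
  have hCcompact : IsCompact C := hKcompact.image (continuous_const.add ρ.continuous)
  have hCmeas : MeasurableSet C := hCcompact.isClosed.measurableSet
  have hCconv : Convex ℝ C := by
    have h1 : C = (fun z => x + z) '' (⇑ρ '' K) := by
      rw [hCdef, Set.image_image]
    rw [h1]
    have h2 : Convex ℝ (⇑ρ '' K) := hKconv.linear_image ρ.toLinearMap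
    simpa [Set.image_add_left]  using h2.translate x
  have hCint : (interior C).Nonempty := by
    set v0 : EuclideanSpace ℝ (Fin 2) := (rc/2) • EuclideanSpace.single (0 : Fin 2) (1:ℝ)
      with hv0def
    have hv0norm : ‖v0‖ = rc/2 := by
      rw [hv0def, norm_smul, EuclideanSpace.norm_single]
      simp only [Real.norm_eq_abs, norm_one, mul_one]
      exact abs_of_pos (by positivity)
    have hv00 : v0 0 = rc/2 := by
      rw [hv0def]
      simp [PiLp.smul_apply, EuclideanSpace.single_apply, smul_eq_mul]
    set O : Set (EuclideanSpace ℝ (Fin 2)) := {v : EuclideanSpace ℝ (Fin 2) | ‖v‖ < rc} ∩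
        {v : EuclideanSpace ℝ (Fin 2) | ‖v‖ * Real.cos θ < v 0} with hOdef
    have hOopen : IsOpen O := (isOpen_lt continuous_norm continuous_const).inter
      (isOpen_lt (continuous_norm.mul continuous_const) hproj)
    have hOsub : O ⊆ K := fun v hv => ⟨hv.1.le, hv.2.le⟩
    have hv0O : v0 ∈ O := by
      constructor
      · show ‖v0‖ < rc
        rw [hv0norm]; linarith
      · show ‖v0‖ * Real.cos θ < v0 0
        rw [hv0norm, hv00]; nlinarith
    have hKint : v0 ∈ interior K := interior_maximal hOsub hOopen hv0O
    set hmo : EuclideanSpace ℝ (Fin 2) ≃ₜ EuclideanSpace ℝ (Fin 2) :=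
      ρe.toHomeomorph.trans (Homeomorph.addLeft x) with hmodef
    have hcoe : ⇑hmo = fun y => x + ρ y := by
      funext y
      simp [hmodef, hρe]
    have himg : ⇑hmo '' K = C := by rw [hcoe]
    refine ⟨hmo v0, ?_⟩
    rw [← himg, ← Homeomorph.image_interior]
    exact ⟨v0, hKint, rfl⟩
  have hUC : UniqueDiffOn ℝ C := uniqueDiffOn_convex hCconv hCint
  -- the derivative within C
  have hfC : ContDiffOn ℝ (⊤ : ℕ∞) f C := hf.mono hCΩ
  have hfdiff : DifferentiableOn ℝ f C := hfC.differentiableOn (by simp)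
  set Df' : EuclideanSpace ℝ (Fin 2) → (EuclideanSpace ℝ (Fin 2) →L[ℝ] ℝ) :=
    fun y => fderivWithin ℝ f C y with hDf'def
  have hDf'eq : ∀ y ∈ C, Df' y = Df y := by
    intro y hy
    exact ((hDf y (hCΩ hy)).mono hCΩ).fderivWithin (hUC y hy)
  have hDf'c : ContinuousOn Df' C := hfC.continuousOn_fderivWithin hUC (by simp)
  have hDf'has : ∀ y ∈ C, HasFDerivWithinAt f (Df' y) C y :=
    fun y hy => (hfdiff y hy).hasFDerivWithinAt
  -- the parametrization
  set T : ℝ × ℝ → EuclideanSpace ℝ (Fin 2) := fun v => x + ρ (planeMap v) with hTdef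
  have hTcont : Continuous T := continuous_const.add (ρ.continuous.comp planeMap.continuous)
  set Te : (ℝ × ℝ) ≃ᵐ EuclideanSpace ℝ (Fin 2) :=
    planeEquiv.trans ((ρe.toHomeomorph.trans (Homeomorph.addLeft x)).toMeasurableEquiv) with hTedef
  have hTe : ⇑Te = T := by
    funext v
    simp only [hTedef, MeasurableEquiv.coe_trans, Function.comp_apply,
      Homeomorph.toMeasurableEquiv_coe, Homeomorph.trans_apply, Homeomorph.coe_addLeft,
      LinearIsometryEquiv.coe_toHomeomorph]
    rw [planeEquiv_eq, hTdef]
    simp [hρe]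
  have hTmp : MeasurePreserving T volume volume := by
    rw [← hTe, hTedef]
    have h3 : MeasurePreserving (fun z : EuclideanSpace ℝ (Fin 2) => x + z) volume volume :=
      measurePreserving_add_left volume x
    have h2 : MeasurePreserving (⇑ρe) volume volume := ρe.measurePreserving
    have := (h3.comp h2).comp planeMap_measurePreserving
    rw [← planeEquiv_eq] at this
    convert this using 1
    rfl
  have hTemb : MeasurableEmbedding T := hTe ▸ Te.measurableEmbedding
  set P' : ℝ × ℝ → ℝ × ℝ := fun z => (z.1 * Real.cos z.2, z.1 * Real.sin z.2) with hP'def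
  have hP'cont : Continuous P' := by
    apply Continuous.prodMk
    · exact continuous_fst.mul (Real.continuous_cos.comp continuous_snd)
    · exact continuous_fst.mul (Real.continuous_sin.comp continuous_snd)
  set S : Set (ℝ × ℝ) := Ioc (0:ℝ) rc ×ˢ Ioo (-θ) θ with hSdef
  have hSm : MeasurableSet S := measurableSet_Ioc.prod measurableSet_Ioo
  set Scl : Set (ℝ × ℝ) := Icc (0:ℝ) rc ×ˢ Icc (-θ) θ with hScldef
  have hSclm : MeasurableSet Scl := measurableSet_Icc.prod measurableSet_Icc
  have hSsub : S ⊆ Scl := prod_mono Ioc_subset_Icc_self Ioo_subset_Icc_self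
  -- key geometric fact
  have hKey : ∀ z : ℝ × ℝ, z ∈ Scl → planeMap (P' z) ∈ K := by
    rintro ⟨s', φ⟩ ⟨hs', hφ⟩
    have hs'0 : 0 ≤ s' := hs'.1
    have hφabs : |φ| ≤ θ := abs_le.mpr ⟨hφ.1, hφ.2⟩
    have hnorm : ‖planeMap (P' (s', φ))‖ = s' := by
      rw [planeMap_norm]
      have hsum : (P' (s', φ)).1 ^ 2 + (P' (s', φ)).2 ^ 2 = s' ^ 2 := by
        simp only [hP'def]
        nlinarith [Real.sin_sq_add_cos_sq φ]
      rw [hsum, Real.sqrt_sq hs'0]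
    have hc0 : planeMap (P' (s', φ)) 0 = s' * Real.cos φ := planeMap_apply0 _
    refine ⟨by rw [hnorm]; exact hs'.2, ?_⟩
    rw [hnorm, hc0]
    have hcc : Real.cos θ ≤ Real.cos φ := by
      rw [← Real.cos_abs φ]
      exact Real.cos_le_cos_of_nonneg_of_le_pi (abs_nonneg φ) hθpi hφabs
    exact mul_le_mul_of_nonneg_left hcc hs'0
  have hTP'memC : ∀ z ∈ Scl, T (P' z) ∈ C := by
    intro z hz
    exact ⟨planeMap (P' z), hKey z hz, rfl⟩
  have hTP'memΩ : ∀ z ∈ Scl, T (P' z) ∈ Ω := fun z hz => hCΩ (hTP'memC z hz)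
  -- DD : measurable majorant of the derivative term
  set DD : ℝ × ℝ → ENNReal :=
    Scl.piecewise (fun z => ENNReal.ofReal ‖Df' (T (P' z))‖) 0 with hDDdef
  have hDDmeas : Measurable DD := by
    apply ContinuousOn.measurable_piecewise ?_ continuousOn_const hSclm
    apply ENNReal.continuous_ofReal.comp_continuousOn
    apply continuous_norm.comp_continuousOn
    exact hDf'c.comp (hTcont.comp hP'cont).continuousOn (fun z hz => hTP'memC z hz)
  have hDDeq : ∀ z ∈ Scl, DD z = ENNReal.ofReal ‖Df' (T (P' z))‖ := by
    intro z hz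
    rw [hDDdef]
    exact Set.piecewise_eq_of_mem _ _ _ hz
  -- Step A : change of variables
  have hSA : (∫⁻ z in S, ENNReal.ofReal z.1 *
      ENNReal.ofReal (|f (T (P' z))| ^ p + ‖Df' (T (P' z))‖ ^ p)) ≤ ENNReal.ofReal I := by
    set gE : EuclideanSpace ℝ (Fin 2) → ENNReal :=
      fun y => ENNReal.ofReal (|f y| ^ p + ‖Df' y‖ ^ p) with hgEdef
    set Kpl : Set (ℝ × ℝ) := T ⁻¹' C with hKpldef
    have hTmeas : Measurable T := hTe ▸ Te.measurable
    have hKplm : MeasurableSet Kpl := hTmeas hCmeas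
    set H : ℝ × ℝ → ENNReal := Kpl.indicator (fun v => gE (T v)) with hHdef
    have hStarget : S ⊆ polarCoord.target := by
      rw [polarCoord_target]
      refine Set.prod_mono Ioc_subset_Ioi_self (Ioo_subset_Ioo ?_ ?_) <;> nlinarith
    set B : ℝ × ℝ → ℝ × ℝ →L[ℝ] ℝ × ℝ := fun z =>
      LinearMap.toContinuousLinearMap (Matrix.toLin (Module.Basis.finTwoProd ℝ) (Module.Basis.finTwoProd ℝ)
        !![Real.cos z.2, -z.1 * Real.sin z.2; Real.sin z.2, z.1 * Real.cos z.2]) with hBdef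
    have hB_det : ∀ z : ℝ × ℝ, ((B z).det : ℝ) = z.1 := by
      intro z
      conv_rhs => rw [← one_mul z.1, ← Real.cos_sq_add_sin_sq z.2]
      simp only [hBdef, neg_mul, LinearMap.det_toContinuousLinearMap, LinearMap.det_toLin,
        Matrix.det_fin_two_of, sub_neg_eq_add]
      ring
    have htm : MeasurableSet polarCoord.target := polarCoord.open_target.measurableSet
    have hBde : ∀ z ∈ polarCoord.target,
        HasFDerivWithinAt (⇑polarCoord.symm) (B z) polarCoord.target z :=
      fun z _ => (hasFDerivAt_polarCoord_symm z).hasFDerivWithinAt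
    have hinj : Set.InjOn (⇑polarCoord.symm) polarCoord.target := by
      have := polarCoord.symm.injOn
      rwa [polarCoord.symm_source] at this
    have hjac := lintegral_image_eq_lintegral_abs_det_fderiv_mul volume htm hBde hinj H
    calc (∫⁻ z in S, ENNReal.ofReal z.1 *
          ENNReal.ofReal (|f (T (P' z))| ^ p + ‖Df' (T (P' z))‖ ^ p))
        = ∫⁻ z in S, ENNReal.ofReal z.1 * H (P' z) := by
          apply setLIntegral_congr_fun hSm
          refine (fun z hz => ?_)
          dsimp only
          congr 1
          rw [hHdef, Set.indicator_of_mem]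
          exact Set.mem_preimage.mpr (hTP'memC z (hSsub hz))
      _ ≤ ∫⁻ z in polarCoord.target, ENNReal.ofReal z.1 * H (P' z) :=
          lintegral_mono_set hStarget
      _ = ∫⁻ z in polarCoord.target, ENNReal.ofReal |(B z).det| * H (polarCoord.symm z) := by
          apply setLIntegral_congr_fun htm
          refine (fun z hz => ?_)
          dsimp only
          have hz1 : 0 < z.1 := by
            rw [polarCoord_target] at hz
            exact hz.1
          rw [hB_det z, polarCoord_symm_apply, abs_of_pos hz1]
      _ = ∫⁻ v in ⇑polarCoord.symm '' polarCoord.target, H v := hjac.symm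
      _ = ∫⁻ v in polarCoord.source, H v := by
          rw [polarCoord.symm_image_target_eq_source]
      _ = ∫⁻ v, H v := by
          rw [setLIntegral_congr polarCoord_source_ae_eq_univ, setLIntegral_univ]
      _ = ∫⁻ v in Kpl, gE (T v) := by
          rw [hHdef, lintegral_indicator hKplm]
      _ = ∫⁻ y in C, gE y := hTmp.setLIntegral_comp_preimage_emb hTemb gE C
      _ = ∫⁻ y in C, ENNReal.ofReal (|f y| ^ p + ‖Df y‖ ^ p) := by
          apply setLIntegral_congr_fun hCmeas
          refine (fun y hy => ?_)
          rw [hgEdef]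
          simp only
          rw [hDf'eq y hy]
      _ ≤ ∫⁻ y in Ω, ENNReal.ofReal (|f y| ^ p + ‖Df y‖ ^ p) := lintegral_mono_set hCΩ
      _ = ENNReal.ofReal I := by
          rw [hIdef, MeasureTheory.ofReal_integral_eq_lintegral_ofReal hInt]
          refine Filter.Eventually.of_forall (fun y => ?_)
          have h1 := Real.rpow_nonneg (abs_nonneg (f y)) p
          have h2 := Real.rpow_nonneg (norm_nonneg (Df y)) p
          simp only [Pi.zero_apply]
          linarith
  -- Step B : fundamental theorem of calculus along rays
  have hStepB : ∀ z : ℝ × ℝ, z ∈ S →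
      ENNReal.ofReal |f x| ≤ ENNReal.ofReal |f (T (P' z))| +
        ∫⁻ s' in Ioc (0:ℝ) rc, DD (s', z.2) := by
    rintro ⟨r', φ⟩ ⟨hr', hφ⟩
    have hr'0 : 0 < r' := hr'.1
    have hr'rc : r' ≤ rc := hr'.2
    set u : EuclideanSpace ℝ (Fin 2) := ρ (planeMap (Real.cos φ, Real.sin φ)) with hudef
    have hunorm : ‖u‖ = 1 := by
      rw [hudef, ρ.norm_map, planeMap_norm]
      simp [Real.cos_sq_add_sin_sq]
    set γ : ℝ → EuclideanSpace ℝ (Fin 2) := fun s' => x + s' • u with hγdef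
    have hγeq : ∀ s', γ s' = T (P' (s', φ)) := by
      intro s'
      rw [hγdef, hTdef]
      simp only
      congr 1
      rw [hudef, ← ρ.map_smul, ← planeMap.map_smul]
      have : s' • (Real.cos φ, Real.sin φ) = P' (s', φ) := by
        simp [hP'def, Prod.ext_iff, smul_eq_mul]
      rw [this]
    have hγcont : Continuous γ := continuous_const.add (continuous_id.smul continuous_const)
    have hγC : ∀ s' ∈ Icc (0:ℝ) rc, γ s' ∈ C := by
      intro s' hs'
      rw [hγeq]
      exact hTP'memC (s', φ) ⟨hs', ⟨hφ.1.le, hφ.2.le⟩⟩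
    set h : ℝ → ℝ := fun s' => f (γ s') with hhdef
    set h' : ℝ → ℝ := fun s' => Df' (γ s') u with hh'def
    have hγderiv : ∀ s' : ℝ, HasDerivAt γ u s' := by
      intro s'
      have := ((hasDerivAt_id s').smul_const u).const_add x
      rwa [one_smul] at this
    have hIccsub : Icc (0:ℝ) r' ⊆ Icc (0:ℝ) rc := Icc_subset_Icc le_rfl hr'rc
    have hhd : ∀ t ∈ Ioo (0:ℝ) r', HasDerivWithinAt h (h' t) (Set.Ioi t) t := by
      intro t ht
      have htmem : t ∈ Icc (0:ℝ) rc := ⟨ht.1.le, le_trans ht.2.le hr'rc⟩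
      have hcomp : HasDerivWithinAt h (h' t) (Icc (0:ℝ) rc) t := by
        have hfd := hDf'has (γ t) (hγC t htmem)
        exact hfd.comp_hasDerivWithinAt t ((hγderiv t).hasDerivWithinAt)
          (fun s' hs' => hγC s' hs')
      have : HasDerivAt h (h' t) t := hcomp.hasDerivAt
        (Icc_mem_nhds (by linarith [ht.1]) (by linarith [ht.2, hr'rc]))
      exact this.hasDerivWithinAt
    have hhcont : ContinuousOn h (Icc (0:ℝ) r') := by
      apply (hfC.continuousOn).comp hγcont.continuousOn
      intro s' hs'
      exact hγC s' (hIccsub hs')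
    have hh'cont : ContinuousOn h' (Icc (0:ℝ) rc) := by
      have h1 : ContinuousOn (fun s' => Df' (γ s')) (Icc (0:ℝ) rc) :=
        hDf'c.comp hγcont.continuousOn (fun s' hs' => hγC s' hs')
      exact h1.clm_apply continuousOn_const
    have hh'int : IntervalIntegrable h' volume 0 r' := by
      apply ContinuousOn.intervalIntegrable
      rw [Set.uIcc_of_le hr'0.le]
      exact hh'cont.mono hIccsub
    have hFTC : ∫ s' in (0:ℝ)..r', h' s' = h r' - h 0 :=
      intervalIntegral.integral_eq_sub_of_hasDeriv_right_of_le hr'0.le hhcont hhd hh'int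
    have hh0 : h 0 = f x := by rw [hhdef]; simp [hγdef]
    have habs : |f x| ≤ |h r'| + |∫ s' in (0:ℝ)..r', h' s'| := by
      rw [hFTC, ← hh0]
      calc |h 0| = |(h 0 - h r') + h r'| := by ring_nf
        _ ≤ |h 0 - h r'| + |h r'| := abs_add_le _ _
        _ = |h r'| + |h r' - h 0| := by rw [abs_sub_comm]; ring
    have hintabs : |∫ s' in (0:ℝ)..r', h' s'| ≤ ∫ s' in (0:ℝ)..r', |h' s'| :=
      intervalIntegral.abs_integral_le_integral_abs hr'0.le
    have hintnn : 0 ≤ ∫ s' in (0:ℝ)..r', |h' s'| := le_trans (abs_nonneg _) hintabs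
    have hint2 : IntegrableOn (fun s' => |h' s'|) (Ioc (0:ℝ) r') := by
      have hca : ContinuousOn (fun s' => |h' s'|) (Icc (0:ℝ) r') := (hh'cont.mono hIccsub).abs
      exact (hca.integrableOn_Icc).mono_set Ioc_subset_Icc_self
    have hofReal : ENNReal.ofReal (∫ s' in (0:ℝ)..r', |h' s'|)
        = ∫⁻ s' in Ioc (0:ℝ) r', ENNReal.ofReal |h' s'| := by
      rw [intervalIntegral.integral_of_le hr'0.le]
      rw [MeasureTheory.ofReal_integral_eq_lintegral_ofReal hint2]
      exact Filter.Eventually.of_forall (fun s' => abs_nonneg _)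
    have hlin : (∫⁻ s' in Ioc (0:ℝ) r', ENNReal.ofReal |h' s'|) ≤
        ∫⁻ s' in Ioc (0:ℝ) rc, DD (s', φ) := by
      refine le_trans ?_ (lintegral_mono_set (Ioc_subset_Ioc le_rfl hr'rc))
      apply setLIntegral_mono' measurableSet_Ioc
      intro s' hs'
      have hmem : (s', φ) ∈ Scl := ⟨⟨hs'.1.le, le_trans hs'.2 hr'rc⟩, ⟨hφ.1.le, hφ.2.le⟩⟩
      rw [hDDeq _ hmem]
      apply ENNReal.ofReal_le_ofReal
      have heq1 : h' s' = Df' (T (P' (s', φ))) u := by rw [hh'def]; simp only; rw [hγeq]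
      rw [heq1]
      calc |(Df' (T (P' (s', φ)))) u| ≤ ‖Df' (T (P' (s', φ)))‖ * ‖u‖ := by
            rw [← Real.norm_eq_abs]
            exact ContinuousLinearMap.le_opNorm _ _
        _ = ‖Df' (T (P' (s', φ)))‖ := by rw [hunorm, mul_one]
    have hhr' : h r' = f (T (P' (r', φ))) := by rw [hhdef]; simp only; rw [hγeq]
    calc ENNReal.ofReal |f x|
        ≤ ENNReal.ofReal (|h r'| + ∫ s' in (0:ℝ)..r', |h' s'|) :=
          ENNReal.ofReal_le_ofReal (by linarith)
      _ = ENNReal.ofReal |h r'| + ENNReal.ofReal (∫ s' in (0:ℝ)..r', |h' s'|) :=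
          ENNReal.ofReal_add (abs_nonneg _) hintnn
      _ ≤ ENNReal.ofReal |h r'| + ∫⁻ s' in Ioc (0:ℝ) rc, DD (s', φ) := by
          rw [hofReal]
          exact add_le_add le_rfl hlin
      _ = ENNReal.ofReal |f (T (P' (r', φ)))| + ∫⁻ s' in Ioc (0:ℝ) rc, DD (s', φ) := by
          rw [hhr']
  -- Step C : averaging and Hölder
  have hMain : A * ENNReal.ofReal |f x| ≤ Ktot * (ENNReal.ofReal I) ^ (1/p) := by
    set M : Measure ℝ := volume.restrict (Ioc (0:ℝ) rc) with hMdef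
    set N : Measure ℝ := volume.restrict (Ioo (-θ) θ) with hNdef
    have hprodS : (volume : Measure (ℝ × ℝ)).restrict S = M.prod N := by
      rw [hMdef, hNdef, Measure.prod_restrict, hSdef, ← Measure.volume_eq_prod]
    set FF : ℝ × ℝ → ENNReal := fun z => ENNReal.ofReal |f (T (P' z))| with hFFdef
    have hFFae : AEMeasurable FF (volume.restrict S) := by
      apply ContinuousOn.aemeasurable ?_ hSm
      apply ENNReal.continuous_ofReal.comp_continuousOn
      apply continuous_abs.comp_continuousOn
      exact (hf.continuousOn).comp (hTcont.comp hP'cont).continuousOn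
        (fun z hz => hTP'memΩ z (hSsub hz))
    have hfst : Measurable fun z : ℝ × ℝ => ENNReal.ofReal z.1 :=
      measurable_fst.ennreal_ofReal
    set W : ℝ → ENNReal := fun φ => ∫⁻ s' in Ioc (0:ℝ) rc, DD (s', φ) with hWdef
    have hWmeas : Measurable W := by
      have h0 : Measurable (Function.uncurry fun φ s' => DD (s', φ)) :=
        hDDmeas.comp measurable_swap
      exact h0.lintegral_prod_right
    have hconst : (∫⁻ z in S, ENNReal.ofReal z.1) = A := by
      rw [hprodS]
      have h0 := lintegral_prod_mul (μ := M) (ν := N)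
        (f := fun r => ENNReal.ofReal r) (g := fun _ => (1:ENNReal))
        ENNReal.measurable_ofReal.aemeasurable aemeasurable_const
      simp only [mul_one, lintegral_const, one_mul] at h0
      rw [h0, hAdef, hNdef, Measure.restrict_apply_univ]
    have hstart : (∫⁻ z in S, ENNReal.ofReal z.1 * ENNReal.ofReal |f x|)
        = A * ENNReal.ofReal |f x| := by
      rw [lintegral_mul_const _ hfst, hconst]
    have hB2 : (∫⁻ z in S, ENNReal.ofReal z.1 * ENNReal.ofReal |f x|)
        ≤ ∫⁻ z in S, ENNReal.ofReal z.1 * (FF z + W z.2) :=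
      setLIntegral_mono' hSm (fun z hz => mul_le_mul_right (hStepB z hz) _)
    have hsplit : (∫⁻ z in S, ENNReal.ofReal z.1 * (FF z + W z.2))
        = (∫⁻ z in S, ENNReal.ofReal z.1 * FF z)
          + ∫⁻ z in S, ENNReal.ofReal z.1 * W z.2 := by
      have h0 : ∀ z : ℝ × ℝ, ENNReal.ofReal z.1 * (FF z + W z.2)
          = ENNReal.ofReal z.1 * FF z + ENNReal.ofReal z.1 * W z.2 := fun z => mul_add _ _ _
      rw [lintegral_congr h0, lintegral_add_left' (f := fun z => ENNReal.ofReal z.1 * FF z) (hfst.aemeasurable.mul hFFae)]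
    -- Term 1
    have hT1 : (∫⁻ z in S, ENNReal.ofReal z.1 * FF z)
        ≤ A ^ (1/q) * (ENNReal.ofReal I) ^ (1/p) := by
      set F1 : ℝ × ℝ → ENNReal := fun z => ENNReal.ofReal z.1 ^ (1/q) with hF1def
      set G1 : ℝ × ℝ → ENNReal := fun z => ENNReal.ofReal z.1 ^ (1/p) * FF z with hG1def
      have hsplit1 : (∫⁻ z in S, ENNReal.ofReal z.1 * FF z) = ∫⁻ z in S, (F1 * G1) z := by
        apply setLIntegral_congr_fun hSm
        refine (fun z hz => ?_)
        have hz1 : (0:ℝ) < z.1 := hz.1.1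
        have hne : ENNReal.ofReal z.1 ≠ 0 := by
          simpa [ENNReal.ofReal_eq_zero, not_le] using hz1
        have hcomb : ENNReal.ofReal z.1 = F1 z * ENNReal.ofReal z.1 ^ (1/p) := by
          rw [hF1def]
          simp only
          rw [← ENNReal.rpow_add _ _ hne ENNReal.ofReal_ne_top]
          rw [show 1/q + 1/p = 1 by
            have h3 := hpq.inv_add_inv_eq_one
            rw [one_div, one_div]; linarith]
          rw [ENNReal.rpow_one]
        calc ENNReal.ofReal z.1 * FF z
            = (F1 z * ENNReal.ofReal z.1 ^ (1/p)) * FF z := by rw [← hcomb]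
          _ = (F1 * G1) z := by
              simp only [Pi.mul_apply, hG1def]
              ring
      rw [hsplit1]
      have hF1m : AEMeasurable F1 (volume.restrict S) := (hfst.pow_const _).aemeasurable
      have hG1m : AEMeasurable G1 (volume.restrict S) :=
        (hfst.pow_const _).aemeasurable.mul hFFae
      refine le_trans (ENNReal.lintegral_mul_le_Lp_mul_Lq (volume.restrict S) hpq.symm hF1m hG1m)
        (mul_le_mul' (le_of_eq ?_) ?_)
      · congr 1
        rw [← hconst]
        apply setLIntegral_congr_fun hSm
        refine (fun z hz => ?_)
        simp only [hF1def]
        rw [← ENNReal.rpow_mul, one_div, inv_mul_cancel₀ hqne, ENNReal.rpow_one]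
      · apply ENNReal.rpow_le_rpow ?_ (by positivity)
        have heq : ∀ z ∈ S, G1 z ^ p
            = ENNReal.ofReal z.1 * ENNReal.ofReal (|f (T (P' z))| ^ p) := by
          intro z hz
          simp only [hG1def, hFFdef]
          rw [ENNReal.mul_rpow_of_nonneg _ _ (by positivity : (0:ℝ) ≤ p)]
          rw [← ENNReal.rpow_mul, one_div, inv_mul_cancel₀ hpne, ENNReal.rpow_one]
          rw [ENNReal.ofReal_rpow_of_nonneg (abs_nonneg _) (by positivity : (0:ℝ) ≤ p)]
        refine le_trans (le_of_eq (setLIntegral_congr_fun hSm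
          heq)) (le_trans ?_ hSA)
        apply setLIntegral_mono' hSm
        intro z hz
        apply mul_le_mul_right
        apply ENNReal.ofReal_le_ofReal
        have := Real.rpow_nonneg (norm_nonneg (Df' (T (P' z)))) p
        linarith
    -- Term 2
    have hT2 : (∫⁻ z in S, ENNReal.ofReal z.1 * W z.2)
        ≤ (AR * (BR * NV) ^ (1/q)) * (ENNReal.ofReal I) ^ (1/p) := by
      have hfact : (∫⁻ z in S, ENNReal.ofReal z.1 * W z.2) = AR * ∫⁻ φ, W φ ∂N := by
        rw [hprodS, lintegral_prod_mul ENNReal.measurable_ofReal.aemeasurable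
          hWmeas.aemeasurable]
      have hswap : (∫⁻ φ, W φ ∂N) = ∫⁻ z in S, DD z := by
        rw [show (∫⁻ z in S, DD z) = ∫⁻ z, DD z ∂(M.prod N) by rw [← hprodS]]
        rw [lintegral_prod_symm DD hDDmeas.aemeasurable]
      have hDle : (∫⁻ z in S, DD z)
          ≤ (BR * NV) ^ (1/q) * (ENNReal.ofReal I) ^ (1/p) := by
        set F2 : ℝ × ℝ → ENNReal := fun z => ENNReal.ofReal z.1 ^ ((1-q)/q) with hF2def
        set G2 : ℝ × ℝ → ENNReal := fun z => ENNReal.ofReal z.1 ^ (1/p) * DD z with hG2def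
        have hsplit2 : (∫⁻ z in S, DD z) = ∫⁻ z in S, (F2 * G2) z := by
          apply setLIntegral_congr_fun hSm
          refine (fun z hz => ?_)
          have hz1 : (0:ℝ) < z.1 := hz.1.1
          have hne : ENNReal.ofReal z.1 ≠ 0 := by
            simpa [ENNReal.ofReal_eq_zero, not_le] using hz1
          have hone : F2 z * ENNReal.ofReal z.1 ^ (1/p) = 1 := by
            simp only [hF2def]
            rw [← ENNReal.rpow_add _ _ hne ENNReal.ofReal_ne_top]
            rw [show (1-q)/q + 1/p = 0 by
              have h4 : (1-q)/q = 1/q - 1 := by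
                rw [sub_div, div_self hqne]
              have h3 := hpq.inv_add_inv_eq_one
              rw [h4, one_div, one_div]; linarith]
            rw [ENNReal.rpow_zero]
          calc DD z = 1 * DD z := (one_mul _).symm
            _ = (F2 z * ENNReal.ofReal z.1 ^ (1/p)) * DD z := by rw [hone]
            _ = (F2 * G2) z := by
                simp only [Pi.mul_apply, hG2def]
                ring
        rw [hsplit2]
        have hF2m : AEMeasurable F2 (volume.restrict S) := (hfst.pow_const _).aemeasurable
        have hG2m : AEMeasurable G2 (volume.restrict S) :=
          ((hfst.pow_const _).mul hDDmeas).aemeasurable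
        refine le_trans (ENNReal.lintegral_mul_le_Lp_mul_Lq (volume.restrict S) hpq.symm hF2m hG2m)
          (mul_le_mul' (le_of_eq ?_) ?_)
        · congr 1
          have h5 : ∀ z : ℝ × ℝ, F2 z ^ q
              = (fun r => ENNReal.ofReal r ^ (1-q)) z.1 * (fun _ : ℝ => (1:ENNReal)) z.2 := by
            intro z
            simp only [hF2def, mul_one]
            rw [← ENNReal.rpow_mul, div_mul_cancel₀ _ hqne]
          rw [lintegral_congr h5, hprodS, lintegral_prod_mul
            (ENNReal.measurable_ofReal.pow_const _).aemeasurable aemeasurable_const]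
          simp only [lintegral_const, one_mul]
          rw [hBRdef, hNVdef, hNdef, Measure.restrict_apply_univ]
        · apply ENNReal.rpow_le_rpow ?_ (by positivity)
          have heq : ∀ z ∈ S, G2 z ^ p
              = ENNReal.ofReal z.1 * ENNReal.ofReal (‖Df' (T (P' z))‖ ^ p) := by
            intro z hz
            simp only [hG2def]
            rw [hDDeq z (hSsub hz)]
            rw [ENNReal.mul_rpow_of_nonneg _ _ (by positivity : (0:ℝ) ≤ p)]
            rw [← ENNReal.rpow_mul, one_div, inv_mul_cancel₀ hpne, ENNReal.rpow_one]
            rw [ENNReal.ofReal_rpow_of_nonneg (norm_nonneg _) (by positivity : (0:ℝ) ≤ p)]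
          refine le_trans (le_of_eq (setLIntegral_congr_fun hSm
            heq)) (le_trans ?_ hSA)
          apply setLIntegral_mono' hSm
          intro z hz
          apply mul_le_mul_right
          apply ENNReal.ofReal_le_ofReal
          have := Real.rpow_nonneg (abs_nonneg (f (T (P' z)))) p
          linarith
      calc (∫⁻ z in S, ENNReal.ofReal z.1 * W z.2)
          = AR * ∫⁻ φ, W φ ∂N := hfact
        _ = AR * ∫⁻ z in S, DD z := by rw [hswap]
        _ ≤ AR * ((BR * NV) ^ (1/q) * (ENNReal.ofReal I) ^ (1/p)) := mul_le_mul_right hDle _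
        _ = (AR * (BR * NV) ^ (1/q)) * (ENNReal.ofReal I) ^ (1/p) := by rw [mul_assoc]
    calc A * ENNReal.ofReal |f x|
        = ∫⁻ z in S, ENNReal.ofReal z.1 * ENNReal.ofReal |f x| := hstart.symm
      _ ≤ ∫⁻ z in S, ENNReal.ofReal z.1 * (FF z + W z.2) := hB2
      _ = (∫⁻ z in S, ENNReal.ofReal z.1 * FF z)
            + ∫⁻ z in S, ENNReal.ofReal z.1 * W z.2 := hsplit
      _ ≤ A ^ (1/q) * (ENNReal.ofReal I) ^ (1/p)
            + (AR * (BR * NV) ^ (1/q)) * (ENNReal.ofReal I) ^ (1/p) := add_le_add hT1 hT2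
      _ = Ktot * (ENNReal.ofReal I) ^ (1/p) := by rw [hKdef, add_mul]
  -- conclusion
  have hfin : ENNReal.ofReal |f x| ≤ cE * (ENNReal.ofReal I) ^ (1/p) := by
    calc ENNReal.ofReal |f x| = (A⁻¹ * A) * ENNReal.ofReal |f x| := by
          rw [ENNReal.inv_mul_cancel hApos hAtop, one_mul]
      _ = A⁻¹ * (A * ENNReal.ofReal |f x|) := by rw [mul_assoc]
      _ ≤ A⁻¹ * (Ktot * (ENNReal.ofReal I) ^ (1/p)) := mul_le_mul_right hMain _
      _ = cE * (ENNReal.ofReal I) ^ (1/p) := by rw [hcEdef, mul_assoc]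
  have hstep : |f x| ≤ cE.toReal * I ^ (1/p) := by
    have h1 : (ENNReal.ofReal I) ^ (1/p) = ENNReal.ofReal (I ^ (1/p)) :=
      ENNReal.ofReal_rpow_of_nonneg hI0 (by positivity)
    have h2 : cE * ENNReal.ofReal (I ^ (1/p)) = ENNReal.ofReal (cE.toReal * I ^ (1/p)) := by
      rw [ENNReal.ofReal_mul ENNReal.toReal_nonneg, ENNReal.ofReal_toReal hcEtop]
    rw [h1, h2] at hfin
    exact (ENNReal.ofReal_le_ofReal_iff (by positivity)).mp hfin
  calc |f x| ≤ cE.toReal * I ^ (1/p) := hstep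
    _ ≤ (cE.toReal + 1) * I ^ (1/p) := by
        apply mul_le_mul_of_nonneg_right (by linarith) (Real.rpow_nonneg hI0 _)
end

section
/- Let n ∈ ℕ, let Γ : ℝⁿ → (ℝⁿ → ℝⁿ → ℝⁿ) be a smooth map taking values in bilinear maps (the Christoffel symbols of a connection in a coordinate chart), and let p, η₀ ∈ ℝⁿ. Let γ, θ : ℝ × ℝ → ℝⁿ be smooth maps such that γ(0, t) = θ(0, t) = p for all t ∈ [0, 1], and (∂γ/∂λ)(0, t) = (∂θ/∂λ)(0, t) for all t ∈ [0, 1]. Let η, η̃ : ℝ × ℝ → ℝⁿ be smooth maps with η(λ, 0) = η̃(λ, 0) = η₀ for all λ, satisfying the parallel transport equations (∂η/∂t)(λ, t) = −Γ(γ(λ, t))(η(λ, t), (∂γ/∂t)(λ, t)) and (∂η̃/∂t)(λ, t) = −Γ(θ(λ, t))(η̃(λ, t), (∂θ/∂t)(λ, t)) for all (λ, t) ∈ ℝ × [0, 1]. Then the map λ ↦ η(λ, 1) − η̃(λ, 1) has derivative 0 at λ = 0. -/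
open Set Filter Topology

variable {E : Type*} [NormedAddCommGroup E] [NormedSpace ℝ E]

/-- partial derivative in the second variable as HasDerivAt -/
lemma aux_snd (f : ℝ × ℝ → E) (hf : ContDiff ℝ (⊤ : ℕ∞) f) (a b : ℝ) :
    HasDerivAt (fun t => f (a, t)) (fderiv ℝ f (a, b) (0, 1)) b := by
  have h1 : HasDerivAt (fun t : ℝ => ((a, t) : ℝ × ℝ)) ((0, 1) : ℝ × ℝ) b :=
    HasDerivAt.prodMk (hasDerivAt_const b a) (hasDerivAt_id b)
  exact (hf.differentiable (by simp) (a, b)).hasFDerivAt.comp_hasDerivAt b h1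

lemma aux_fst (f : ℝ × ℝ → E) (hf : ContDiff ℝ (⊤ : ℕ∞) f) (a b : ℝ) :
    HasDerivAt (fun s => f (s, b)) (fderiv ℝ f (a, b) (1, 0)) a := by
  have h1 : HasDerivAt (fun s : ℝ => ((s, b) : ℝ × ℝ)) ((1, 0) : ℝ × ℝ) a :=
    HasDerivAt.prodMk (hasDerivAt_id a) (hasDerivAt_const a b)
  exact (hf.differentiable (by simp) (a, b)).hasFDerivAt.comp_hasDerivAt a h1

lemma aux_smooth_fderiv_apply (f : ℝ × ℝ → E) (hf : ContDiff ℝ (⊤ : ℕ∞) f) (v : ℝ × ℝ) :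
    ContDiff ℝ (⊤ : ℕ∞) (fun y => fderiv ℝ f y v) :=
  (ContinuousLinearMap.apply ℝ E v).contDiff.comp (hf.fderiv_right (by simp))

/-- Schwarz symmetry in directional form. -/
lemma aux_symm (f : ℝ × ℝ → E) (hf : ContDiff ℝ (⊤ : ℕ∞) f) (x v w : ℝ × ℝ) :
    fderiv ℝ (fun y => fderiv ℝ f y v) x w = fderiv ℝ (fun y => fderiv ℝ f y w) x v := by
  have hdf : ∀ y, HasFDerivAt f (fderiv ℝ f y) y := fun y =>
    (hf.differentiable (by simp) y).hasFDerivAt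
  have hdf2 : HasFDerivAt (fderiv ℝ f) (fderiv ℝ (fderiv ℝ f) x) x :=
    ((hf.fderiv_right (m := (⊤ : ℕ∞)) (by simp)).differentiable (by simp) x).hasFDerivAt
  have key : ∀ a b : ℝ × ℝ, fderiv ℝ (fun y => fderiv ℝ f y a) x b =
      fderiv ℝ (fderiv ℝ f) x b a := by
    intro a b
    have h := ((ContinuousLinearMap.apply ℝ E a).hasFDerivAt.comp x hdf2).fderiv
    have : (⇑(ContinuousLinearMap.apply ℝ E a) ∘ fderiv ℝ f) =
        fun y => fderiv ℝ f y a := rfl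
    rw [this] at h
    rw [h]; rfl
  rw [key, key]
  exact second_derivative_symmetric hdf hdf2 w v

lemma aux_t0 (f : ℝ × ℝ → E) (hf : ContDiff ℝ (⊤ : ℕ∞) f) (p : E)
    (h0 : ∀ s ∈ Icc (0:ℝ) 1, f (0, s) = p) {s : ℝ} (hs : s ∈ Icc (0:ℝ) 1) :
    fderiv ℝ f ((0:ℝ), s) ((0:ℝ), (1:ℝ)) = 0 := by
  have h1 := (aux_snd f hf 0 s).hasDerivWithinAt (s := Icc (0:ℝ) 1)
  have h2 : HasDerivWithinAt (fun t => f (0, t)) 0 (Icc (0:ℝ) 1) s :=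
    (hasDerivWithinAt_const s _ p).congr h0 (h0 s hs)
  have hu := uniqueDiffOn_Icc (zero_lt_one) s hs
  rw [← h1.derivWithin hu, h2.derivWithin hu]

lemma aux_key (Γ : E → (E →L[ℝ] E →L[ℝ] E)) (hΓ : ContDiff ℝ (⊤ : ℕ∞) Γ)
    (p η₀ : E) (γ : ℝ × ℝ → E) (hγ : ContDiff ℝ (⊤ : ℕ∞) γ)
    (hγ0 : ∀ t ∈ Icc (0:ℝ) 1, γ (0, t) = p)
    (η : ℝ × ℝ → E) (hη : ContDiff ℝ (⊤ : ℕ∞) η)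
    (hpt : ∀ lam : ℝ, ∀ t ∈ Icc (0:ℝ) 1,
      deriv (fun t' : ℝ => η (lam, t')) t =
        -(Γ (γ (lam, t)) (η (lam, t)) (deriv (fun t' : ℝ => γ (lam, t')) t)))
    (hη0t : ∀ t ∈ Icc (0:ℝ) 1, η (0, t) = η₀)
    {t : ℝ} (ht : t ∈ Ioo (0:ℝ) 1) :
    HasDerivAt (fun s => fderiv ℝ η ((0:ℝ), s) ((1:ℝ), (0:ℝ)))
      (-(Γ p η₀ (fderiv ℝ (fun y => fderiv ℝ γ y ((1:ℝ), (0:ℝ))) ((0:ℝ), t) ((0:ℝ), (1:ℝ))))) t := by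
  obtain ⟨ht0, ht1⟩ := ht
  have htI : t ∈ Icc (0:ℝ) 1 := ⟨ht0.le, ht1.le⟩
  have hγp : γ ((0:ℝ), t) = p := hγ0 t htI
  have hηe : η ((0:ℝ), t) = η₀ := hη0t t htI
  have hD1 : ContDiff ℝ (⊤ : ℕ∞) (fun y => fderiv ℝ η y ((1:ℝ), (0:ℝ))) :=
    aux_smooth_fderiv_apply η hη (1, 0)
  have step1 : HasDerivAt (fun s => fderiv ℝ η ((0:ℝ), s) ((1:ℝ), (0:ℝ)))
      (fderiv ℝ (fun y => fderiv ℝ η y ((1:ℝ), (0:ℝ))) ((0:ℝ), t) ((0:ℝ), (1:ℝ))) t :=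
    aux_snd _ hD1 0 t
  have final : fderiv ℝ (fun y => fderiv ℝ η y ((1:ℝ), (0:ℝ))) ((0:ℝ), t) ((0:ℝ), (1:ℝ))
      = -(Γ p η₀ (fderiv ℝ (fun y => fderiv ℝ γ y ((1:ℝ), (0:ℝ))) ((0:ℝ), t) ((0:ℝ), (1:ℝ)))) := by
    rw [aux_symm η hη ((0:ℝ), t) ((1:ℝ), (0:ℝ)) ((0:ℝ), (1:ℝ))]
    have heq : (fun y => fderiv ℝ η y ((0:ℝ), (1:ℝ))) =ᶠ[𝓝 (((0:ℝ), t) : ℝ × ℝ)]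
        (fun y => -(Γ (γ y) (η y) (fderiv ℝ γ y ((0:ℝ), (1:ℝ))))) := by
      have hU : (Set.univ ×ˢ Ioo (0:ℝ) 1 : Set (ℝ × ℝ)) ∈ 𝓝 (((0:ℝ), t) : ℝ × ℝ) :=
        (isOpen_univ.prod isOpen_Ioo).mem_nhds ⟨mem_univ _, ⟨ht0, ht1⟩⟩
      filter_upwards [hU] with y hy
      obtain ⟨a, b⟩ := y
      have hb : b ∈ Icc (0:ℝ) 1 := ⟨hy.2.1.le, hy.2.2.le⟩
      have e := hpt a b hb
      rw [(aux_snd η hη a b).deriv, (aux_snd γ hγ a b).deriv] at e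
      exact e
    rw [heq.fderiv_eq]
    -- differentiate the right-hand side
    have hγd : HasFDerivAt γ (fderiv ℝ γ ((0:ℝ), t)) ((0:ℝ), t) :=
      (hγ.differentiable (by simp) _).hasFDerivAt
    have hηd : HasFDerivAt η (fderiv ℝ η ((0:ℝ), t)) ((0:ℝ), t) :=
      (hη.differentiable (by simp) _).hasFDerivAt
    have hΓd : HasFDerivAt Γ (fderiv ℝ Γ p) (γ ((0:ℝ), t)) := by
      rw [hγp]; exact (hΓ.differentiable (by simp) p).hasFDerivAt
    have hc : HasFDerivAt (fun x => Γ (γ x))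
        ((fderiv ℝ Γ p).comp (fderiv ℝ γ ((0:ℝ), t))) ((0:ℝ), t) := HasFDerivAt.comp (g := Γ) _ hΓd hγd
    have hc1 := hc.clm_apply hηd
    have hΨd : HasFDerivAt (fun y => fderiv ℝ γ y ((0:ℝ), (1:ℝ)))
        (fderiv ℝ (fun y => fderiv ℝ γ y ((0:ℝ), (1:ℝ))) ((0:ℝ), t)) ((0:ℝ), t) :=
      ((aux_smooth_fderiv_apply γ hγ (0, 1)).differentiable (by simp) _).hasFDerivAt
    have hc2 := (hc1.clm_apply hΨd).neg
    rw [HasFDerivAt.fderiv (f := fun y => -(Γ (γ y) (η y) (fderiv ℝ γ y ((0:ℝ), (1:ℝ))))) hc2]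
    have hz : fderiv ℝ γ ((0:ℝ), t) ((0:ℝ), (1:ℝ)) = 0 := aux_t0 γ hγ p hγ0 htI
    simp only [ContinuousLinearMap.neg_apply, ContinuousLinearMap.add_apply,
      ContinuousLinearMap.coe_comp', Function.comp_apply, ContinuousLinearMap.flip_apply,
      hz, map_zero, add_zero, hγp, hηe]
    rw [aux_symm γ hγ ((0:ℝ), t) ((0:ℝ), (1:ℝ)) ((1:ℝ), (0:ℝ))]
  exact final ▸ step1

lemma aux_const (Γ : E → (E →L[ℝ] E →L[ℝ] E)) (p : E)
    (γ η : ℝ × ℝ → E) (hγ : ContDiff ℝ (⊤ : ℕ∞) γ) (hη : ContDiff ℝ (⊤ : ℕ∞) η)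
    (hγ0 : ∀ t ∈ Icc (0:ℝ) 1, γ (0, t) = p)
    (hpt : ∀ lam : ℝ, ∀ t ∈ Icc (0:ℝ) 1,
      deriv (fun t' : ℝ => η (lam, t')) t =
        -(Γ (γ (lam, t)) (η (lam, t)) (deriv (fun t' : ℝ => γ (lam, t')) t))) :
    ∀ s ∈ Icc (0:ℝ) 1, η ((0:ℝ), s) = η ((0:ℝ), (0:ℝ)) := by
  apply constant_of_has_deriv_right_zero
  · exact (hη.continuous.comp (continuous_const.prodMk continuous_id)).continuousOn
  · intro x hx
    have hx' : x ∈ Icc (0:ℝ) 1 := ⟨hx.1, hx.2.le⟩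
    have hgz : deriv (fun t' : ℝ => γ (0, t')) x = 0 := by
      rw [(aux_snd γ hγ 0 x).deriv]; exact aux_t0 γ hγ p hγ0 hx'
    have e := hpt 0 x hx'
    rw [hgz] at e
    simp only [map_zero, neg_zero] at e
    have h2 : fderiv ℝ η ((0:ℝ), x) ((0:ℝ), (1:ℝ)) = 0 := by
      rw [← (aux_snd η hη 0 x).deriv]; exact e
    exact (h2 ▸ aux_snd η hη 0 x).hasDerivWithinAt

/-- Parallel transports along two families of paths that agree to first order at `λ = 0`
agree to first order: the map `λ ↦ η(λ,1) − η̃(λ,1)` has derivative `0` at `λ = 0`. -/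
theorem stmt_13
    (n : ℕ)
    (Γ : (Fin n → ℝ) → ((Fin n → ℝ) →L[ℝ] (Fin n → ℝ) →L[ℝ] (Fin n → ℝ)))
    (hΓ : ContDiff ℝ (⊤ : ℕ∞) Γ)
    (p η₀ : Fin n → ℝ)
    (γ θ : ℝ × ℝ → (Fin n → ℝ))
    (hγ : ContDiff ℝ (⊤ : ℕ∞) γ) (hθ : ContDiff ℝ (⊤ : ℕ∞) θ)
    (hγ0 : ∀ t ∈ Set.Icc (0 : ℝ) 1, γ (0, t) = p)
    (hθ0 : ∀ t ∈ Set.Icc (0 : ℝ) 1, θ (0, t) = p)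
    (hlam : ∀ t ∈ Set.Icc (0 : ℝ) 1,
      deriv (fun lam : ℝ => γ (lam, t)) 0 = deriv (fun lam : ℝ => θ (lam, t)) 0)
    (η η' : ℝ × ℝ → (Fin n → ℝ))
    (hη : ContDiff ℝ (⊤ : ℕ∞) η) (hη' : ContDiff ℝ (⊤ : ℕ∞) η')
    (hη0 : ∀ lam : ℝ, η (lam, 0) = η₀) (hη'0 : ∀ lam : ℝ, η' (lam, 0) = η₀)
    (hpt : ∀ lam : ℝ, ∀ t ∈ Set.Icc (0 : ℝ) 1,
      deriv (fun t' : ℝ => η (lam, t')) t =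
        -(Γ (γ (lam, t)) (η (lam, t)) (deriv (fun t' : ℝ => γ (lam, t')) t)))
    (hpt' : ∀ lam : ℝ, ∀ t ∈ Set.Icc (0 : ℝ) 1,
      deriv (fun t' : ℝ => η' (lam, t')) t =
        -(Γ (θ (lam, t)) (η' (lam, t)) (deriv (fun t' : ℝ => θ (lam, t')) t))) :
    HasDerivAt (fun lam : ℝ => η (lam, 1) - η' (lam, 1)) 0 0 := by
  -- along λ = 0 the parallel transports are constant
  have hη0t : ∀ s ∈ Icc (0:ℝ) 1, η ((0:ℝ), s) = η₀ := by
    intro s hs; rw [aux_const Γ p γ η hγ hη hγ0 hpt s hs]; exact hη0 0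
  have hη'0t : ∀ s ∈ Icc (0:ℝ) 1, η' ((0:ℝ), s) = η₀ := by
    intro s hs; rw [aux_const Γ p θ η' hθ hη' hθ0 hpt' s hs]; exact hη'0 0
  -- the difference of first variations
  set d : ℝ → (Fin n → ℝ) := fun s =>
    fderiv ℝ η ((0:ℝ), s) ((1:ℝ), (0:ℝ)) - fderiv ℝ η' ((0:ℝ), s) ((1:ℝ), (0:ℝ)) with hd_def
  have hd_cont : Continuous d := by
    have h1 := (aux_smooth_fderiv_apply η hη ((1:ℝ), (0:ℝ))).continuous
    have h2 := (aux_smooth_fderiv_apply η' hη' ((1:ℝ), (0:ℝ))).continuous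
    have hc : Continuous (fun s : ℝ => (((0:ℝ), s) : ℝ × ℝ)) :=
      continuous_const.prodMk continuous_id
    exact (h1.comp hc).sub (h2.comp hc)
  have hd0 : d 0 = 0 := by
    have h1 := aux_fst η hη 0 0
    have h2 := aux_fst η' hη' 0 0
    rw [show (fun lam : ℝ => η (lam, 0)) = fun _ => η₀ from funext hη0] at h1
    rw [show (fun lam : ℝ => η' (lam, 0)) = fun _ => η₀ from funext hη'0] at h2
    have e1 := h1.unique (hasDerivAt_const 0 η₀)
    have e2 := h2.unique (hasDerivAt_const 0 η₀)
    simp only [hd_def]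
    rw [e1, e2, sub_self]
  have hd' : ∀ s ∈ Ioo (0:ℝ) 1, HasDerivAt d 0 s := by
    intro s hs
    have k1 := aux_key Γ hΓ p η₀ γ hγ hγ0 η hη hpt hη0t hs
    have k2 := aux_key Γ hΓ p η₀ θ hθ hθ0 η' hη' hpt' hη'0t hs
    have hGH : fderiv ℝ (fun y => fderiv ℝ γ y ((1:ℝ), (0:ℝ))) ((0:ℝ), s) ((0:ℝ), (1:ℝ))
        = fderiv ℝ (fun y => fderiv ℝ θ y ((1:ℝ), (0:ℝ))) ((0:ℝ), s) ((0:ℝ), (1:ℝ)) := by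
      have hg := aux_snd _ (aux_smooth_fderiv_apply γ hγ ((1:ℝ), (0:ℝ))) 0 s
      have hh := aux_snd _ (aux_smooth_fderiv_apply θ hθ ((1:ℝ), (0:ℝ))) 0 s
      rw [← hg.deriv, ← hh.deriv]
      apply Filter.EventuallyEq.deriv_eq
      filter_upwards [Ioo_mem_nhds hs.1 hs.2] with r hr
      have hrI : r ∈ Icc (0:ℝ) 1 := ⟨hr.1.le, hr.2.le⟩
      rw [← (aux_fst γ hγ 0 r).deriv, ← (aux_fst θ hθ 0 r).deriv]
      exact hlam r hrI
    have := k1.sub k2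
    rw [hGH] at this
    simp only [sub_self] at this; exact this
  -- d is constant on (0,1], hence d 1 = d 0 = 0
  have hconst : ∀ s ∈ Ioo (0:ℝ) 1, d 1 = d s := by
    intro s hs
    have := constant_of_has_deriv_right_zero (f := d) (a := s) (b := 1)
      hd_cont.continuousOn
      (fun x hx => (hd' x ⟨lt_of_lt_of_le hs.1 hx.1, hx.2⟩).hasDerivWithinAt)
    exact this 1 ⟨hs.2.le, le_refl 1⟩
  have t1 : Filter.Tendsto d (𝓝[>] (0:ℝ)) (𝓝 (d 0)) :=
    (hd_cont.tendsto 0).mono_left nhdsWithin_le_nhds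
  have t2 : Filter.Tendsto d (𝓝[>] (0:ℝ)) (𝓝 (d 1)) := by
    apply Filter.Tendsto.congr' _ tendsto_const_nhds
    filter_upwards [Ioo_mem_nhdsGT_of_mem ⟨le_refl (0:ℝ), one_pos⟩] with s hs
    exact hconst s hs
  have hd1 : d 1 = 0 := by rw [tendsto_nhds_unique t2 t1, hd0]
  -- conclude
  have A := aux_fst η hη 0 1
  have B := aux_fst η' hη' 0 1
  have := A.sub B
  rwa [show fderiv ℝ η ((0:ℝ), (1:ℝ)) ((1:ℝ), (0:ℝ)) -
      fderiv ℝ η' ((0:ℝ), (1:ℝ)) ((1:ℝ), (0:ℝ)) = 0 from hd1] at this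
end
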